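/- arXiv:1503.08844 — 7 statements merged into one kernel-verified Lean document; each statement's English description precedes it below -/
import Mathlib

section
/- Let c : ℝ × ℝ → ℝ be a continuous nonnegative function satisfying property 𝒫 (i.e., for all x ≤ x' and y ≤ y', c(x',y') − c(x',y) − c(x,y') + c(x,y) ≤ 0). Let F and G be cumulative distribution functions on ℝ with generalized inverses F⁻ and G⁻, and assume ∫₀¹ c(F⁻(u), G⁻(u)) du < ∞. Then the infimum, over all probability measures μ on ℝ × ℝ whose first marginal has c.d.f. F and whose second marginal has c.d.f. G, of ∫ c dμ equals ∫₀¹ c(F⁻(u), G⁻(u)) du. -/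
open MeasureTheory Set ENNReal

/-- Property 𝒫: `c` defines a negative measure on `ℝ²`. -/
def PropP (c : ℝ × ℝ → ℝ) : Prop :=
  ∀ ⦃x x' y y' : ℝ⦄, x ≤ x' → y ≤ y' →
    c (x', y') - c (x', y) - c (x, y') + c (x, y) ≤ 0

/-- `F` is a cumulative distribution function on `ℝ`. -/
structure IsCDF (F : ℝ → ℝ) : Prop where
  mono : Monotone F
  right_cont : ∀ x, ContinuousWithinAt F (Ici x) x
  tendsto_atBot : Filter.Tendsto F Filter.atBot (nhds 0)
  tendsto_atTop : Filter.Tendsto F Filter.atTop (nhds 1)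

/-- The generalized inverse `F⁻(u) = inf {x | F x ≥ u}` of a c.d.f. -/
noncomputable def gInv (F : ℝ → ℝ) (u : ℝ) : ℝ := sInf {x : ℝ | u ≤ F x}

set_option maxHeartbeats 1000000

namespace CSS

variable {F : ℝ → ℝ}

lemma cdf_nonneg (hF : IsCDF F) (x : ℝ) : 0 ≤ F x :=
  le_of_tendsto hF.tendsto_atBot (Filter.eventually_atBot.2 ⟨x, fun y hy => hF.mono hy⟩)

lemma cdf_le_one (hF : IsCDF F) (x : ℝ) : F x ≤ 1 :=
  ge_of_tendsto hF.tendsto_atTop (Filter.eventually_atTop.2 ⟨x, fun y hy => hF.mono hy⟩)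

lemma setF_nonempty (hF : IsCDF F) {u : ℝ} (hu1 : u < 1) : {x : ℝ | u ≤ F x}.Nonempty := by
  have : ∀ᶠ x in Filter.atTop, F x ∈ Ioi u :=
    hF.tendsto_atTop (Ioi_mem_nhds hu1)
  rcases (this.exists) with ⟨x, hx⟩
  exact ⟨x, le_of_lt (show u < F x from hx)⟩

lemma setF_bddBelow (hF : IsCDF F) {u : ℝ} (hu0 : 0 < u) : BddBelow {x : ℝ | u ≤ F x} := by
  have : ∀ᶠ x in Filter.atBot, F x ∈ Iio u :=
    hF.tendsto_atBot (Iio_mem_nhds hu0)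
  rcases this.exists with ⟨z, hz⟩
  refine ⟨z, fun w hw => ?_⟩
  by_contra h
  push_neg at h
  exact absurd (lt_of_le_of_lt (le_trans hw (hF.mono h.le)) hz) (lt_irrefl u)

/-- Galois characterization of the generalized inverse. -/
lemma gInv_le_iff (hF : IsCDF F) {u : ℝ} (hu0 : 0 < u) (hu1 : u < 1) (x : ℝ) :
    gInv F u ≤ x ↔ u ≤ F x := by
  constructor
  · intro h
    have hne := setF_nonempty hF hu1
    have hbdd := setF_bddBelow hF hu0
    -- first : u ≤ F (sInf S)
    have hmem : u ≤ F (sInf {x : ℝ | u ≤ F x}) := by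
      by_contra hlt
      push_neg at hlt
      have hev : ∀ᶠ y in nhdsWithin (sInf {x : ℝ | u ≤ F x}) (Ici (sInf {x : ℝ | u ≤ F x})),
          F y < u := (hF.right_cont _) (Iio_mem_nhds hlt)
      rw [eventually_nhdsWithin_iff, Metric.eventually_nhds_iff] at hev
      rcases hev with ⟨ε, hε, hball⟩
      have : sInf {x : ℝ | u ≤ F x} < sInf {x : ℝ | u ≤ F x} + ε := by linarith
      rcases (csInf_lt_iff hbdd hne).1 this with ⟨w, hw, hwlt⟩
      have hwge : sInf {x : ℝ | u ≤ F x} ≤ w := csInf_le hbdd hw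
      have : F w < u := by
        apply hball (show dist w (sInf {x : ℝ | u ≤ F x}) < ε by
          rw [Real.dist_eq, abs_lt]; constructor <;> linarith) hwge
      exact absurd hw (by simpa using not_le.2 this)
    exact le_trans hmem (hF.mono h)
  · intro h
    exact csInf_le (setF_bddBelow hF hu0) h

lemma le_cdf_gInv (hF : IsCDF F) {u : ℝ} (hu0 : 0 < u) (hu1 : u < 1) :
    u ≤ F (gInv F u) := (gInv_le_iff hF hu0 hu1 _).1 le_rfl

/-- Measurable modification of the generalized inverse, zero outside `(0,1)`. -/
noncomputable def gInv' (F : ℝ → ℝ) (u : ℝ) : ℝ :=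
  if u ∈ Ioo (0:ℝ) 1 then gInv F u else 0

lemma gInv'_measurable (hF : IsCDF F) : Measurable (gInv' F) := by
  apply measurable_of_Iic
  intro x
  have : gInv' F ⁻¹' Iic x =
      (Ioo (0:ℝ) 1 ∩ Iic (F x)) ∪ (if (0:ℝ) ≤ x then (Ioo (0:ℝ) 1)ᶜ else ∅) := by
    ext u
    simp only [mem_preimage, mem_Iic, gInv', mem_union, mem_inter_iff]
    by_cases hu : u ∈ Ioo (0:ℝ) 1
    · simp only [hu, if_true, true_and]
      rw [gInv_le_iff hF hu.1 hu.2]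
      constructor
      · intro h; exact Or.inl h
      · rintro (h | h)
        · exact h
        · split_ifs at h with h0
          · exact absurd h (by simp [hu])
          · exact absurd h (notMem_empty u)
    · simp only [hu, if_false]
      constructor
      · intro h; right; split_ifs with h0
        · simpa using hu
        · exact absurd h (by push_neg at h0 ⊢; linarith)
      · rintro (⟨h, _⟩ | h)
        · exact absurd h (by simpa using hu)
        · split_ifs at h with h0
          · exact h0
          · exact absurd h (notMem_empty u)
  rw [this]
  split_ifs <;>
    exact MeasurableSet.union (measurableSet_Ioo.inter measurableSet_Iic) (by measurability)

lemma vol_Ioo_inter_Iic {r : ℝ} (h0 : 0 ≤ r) (h1 : r ≤ 1) :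
    volume (Ioo (0:ℝ) 1 ∩ Iic r) = ENNReal.ofReal r := by
  rcases lt_or_eq_of_le h1 with h | h
  · have : Ioo (0:ℝ) 1 ∩ Iic r = Ioc 0 r := by
      ext u; simp only [mem_inter_iff, mem_Ioo, mem_Iic, mem_Ioc]
      constructor
      · rintro ⟨⟨h1', _⟩, h3⟩; exact ⟨h1', h3⟩
      · rintro ⟨h1', h2'⟩; exact ⟨⟨h1', lt_of_le_of_lt h2' h⟩, h2'⟩
    rw [this, Real.volume_Ioc]; simp
  · subst h
    have : Ioo (0:ℝ) 1 ∩ Iic 1 = Ioo 0 1 := by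
      apply inter_eq_self_of_subset_left
      intro u hu; exact le_of_lt hu.2
    rw [this, Real.volume_Ioo]; simp


lemma gInv_mono {F : ℝ → ℝ} (hF : IsCDF F) {u v : ℝ} (hu0 : 0 < u) (hv1 : v < 1)
    (huv : u ≤ v) : gInv F u ≤ gInv F v :=
  (gInv_le_iff hF hu0 (lt_of_le_of_lt huv hv1) _).2
    (le_trans huv (le_cdf_gInv hF (lt_of_lt_of_le hu0 huv) hv1))

lemma cdf_lt_of_lt_gInv {F : ℝ → ℝ} (hF : IsCDF F) {u : ℝ} (hu0 : 0 < u) (hu1 : u < 1)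
    {x : ℝ} (hx : x < gInv F u) : F x < u := by
  by_contra h
  push_neg at h
  exact absurd ((gInv_le_iff hF hu0 hu1 x).2 h) (not_le.2 hx)

/-- clamping map into `[a, b]`. -/
def cl (a b t : ℝ) : ℝ := max a (min t b)

lemma cl_mem {a b : ℝ} (hab : a ≤ b) (t : ℝ) : cl a b t ∈ Icc a b :=
  ⟨le_max_left _ _, max_le hab (min_le_right _ _)⟩

lemma cl_of_mem {a b t : ℝ} (h : t ∈ Icc a b) : cl a b t = t := by
  rw [cl, min_eq_left h.2, max_eq_right h.1]

lemma cl_of_lt {a b t : ℝ} (hab : a ≤ b) (h : t < a) : cl a b t = a := by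
  rw [cl, min_eq_left (le_trans h.le hab), max_eq_left h.le]

lemma cl_of_gt {a b t : ℝ} (hab : a ≤ b) (h : b < t) : cl a b t = b := by
  rw [cl, min_eq_right h.le, max_eq_right hab]

lemma cl_continuous (a b : ℝ) : Continuous (cl a b) :=
  continuous_const.max ((continuous_id.min continuous_const))

/-- The c.d.f. of the marginal clamped to `[a, b]`. -/
noncomputable def clampF (F : ℝ → ℝ) (a b : ℝ) : ℝ → ℝ := fun x =>
  if x < a then 0 else if x < b then F x else 1

lemma clampF_of_lt {F : ℝ → ℝ} {a b x : ℝ} (h : x < a) : clampF F a b x = 0 :=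
  if_pos h

lemma clampF_of_ge {F : ℝ → ℝ} {a b x : ℝ} (hab : a ≤ b) (h : b ≤ x) : clampF F a b x = 1 := by
  rw [clampF, if_neg (not_lt.2 (le_trans hab h)), if_neg (not_lt.2 h)]

lemma clampF_of_mem {F : ℝ → ℝ} {a b x : ℝ} (h1 : a ≤ x) (h2 : x < b) :
    clampF F a b x = F x := by
  rw [clampF, if_neg (not_lt.2 h1), if_pos h2]

lemma isCDF_clampF {F : ℝ → ℝ} (hF : IsCDF F) {a b : ℝ} (hab : a ≤ b) :
    IsCDF (clampF F a b) := by
  constructor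
  · intro x y hxy
    rcases lt_or_ge x a with hx | hx
    · rw [clampF_of_lt hx]
      rcases lt_or_ge y a with hy | hy
      · rw [clampF_of_lt hy]
      · rcases lt_or_ge y b with hy2 | hy2
        · rw [clampF_of_mem hy hy2]; exact cdf_nonneg hF y
        · rw [clampF_of_ge hab hy2]; norm_num
    · rcases lt_or_ge x b with hx2 | hx2
      · rw [clampF_of_mem hx hx2]
        rcases lt_or_ge y b with hy2 | hy2
        · rw [clampF_of_mem (le_trans hx hxy) hy2]; exact hF.mono hxy
        · rw [clampF_of_ge hab hy2]; exact cdf_le_one hF x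
      · rw [clampF_of_ge hab hx2, clampF_of_ge hab (le_trans hx2 hxy)]
  · intro x
    rcases lt_or_ge x a with hx | hx
    · have hev : ∀ᶠ y in nhdsWithin x (Ici x), clampF F a b y = 0 := by
        filter_upwards [eventually_nhdsWithin_of_eventually_nhds
          (Filter.Tendsto.eventually_lt_const hx Filter.tendsto_id)] with y hy
        exact clampF_of_lt hy
      exact (continuousWithinAt_const.congr_of_eventuallyEq hev (clampF_of_lt hx))
    · rcases lt_or_ge x b with hx2 | hx2
      · have hev : ∀ᶠ y in nhdsWithin x (Ici x), clampF F a b y = F y := by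
        -- y ≥ x ≥ a and eventually y < b
          have h1 : ∀ᶠ y in nhdsWithin x (Ici x), y < b :=
            eventually_nhdsWithin_of_eventually_nhds
              (Filter.Tendsto.eventually_lt_const hx2 Filter.tendsto_id)
          filter_upwards [h1, eventually_mem_nhdsWithin] with y hy1 hy2
          exact clampF_of_mem (le_trans hx hy2) hy1
        exact ((hF.right_cont x).congr_of_eventuallyEq hev (clampF_of_mem hx hx2))
      · have hev : ∀ᶠ y in nhdsWithin x (Ici x), clampF F a b y = 1 := by
          filter_upwards [eventually_mem_nhdsWithin] with y hy
          exact clampF_of_ge hab (le_trans hx2 hy)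
        exact (continuousWithinAt_const.congr_of_eventuallyEq hev (clampF_of_ge hab hx2))
  · apply Filter.Tendsto.congr' _ tendsto_const_nhds
    filter_upwards [Filter.eventually_atBot.2 ⟨a - 1, fun y hy => hy⟩] with y hy
    exact (clampF_of_lt (by linarith)).symm
  · apply Filter.Tendsto.congr' _ tendsto_const_nhds
    filter_upwards [Filter.eventually_atTop.2 ⟨b, fun y hy => hy⟩] with y hy
    exact (clampF_of_ge hab hy).symm

/-- The generalized inverse of the clamped c.d.f. is the clamp of the generalized inverse. -/
lemma gInv_clampF {F : ℝ → ℝ} (hF : IsCDF F) {a b : ℝ} (hab : a ≤ b) {u : ℝ}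
    (hu0 : 0 < u) (hu1 : u < 1) : gInv (clampF F a b) u = cl a b (gInv F u) := by
  have hcdf := isCDF_clampF hF hab
  apply le_antisymm
  · rw [gInv_le_iff hcdf hu0 hu1]
    rcases le_or_gt b (cl a b (gInv F u)) with h | h
    · rw [clampF_of_ge hab h]; exact hu1.le
    · have hclmem := cl_mem hab (gInv F u)
      rw [clampF_of_mem hclmem.1 h]
      rcases le_or_gt (gInv F u) a with hg | hg
      · have : cl a b (gInv F u) = a := by
          rw [cl, min_eq_left (le_trans hg hab), max_eq_left hg]
        rw [this]
        exact le_trans (le_cdf_gInv hF hu0 hu1) (hF.mono hg)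
      · rcases le_or_gt (gInv F u) b with hg2 | hg2
        · rw [cl_of_mem ⟨hg.le, hg2⟩]
          exact le_cdf_gInv hF hu0 hu1
        · rw [cl_of_gt hab hg2] at h; exact absurd h (lt_irrefl b)
  · apply le_csInf (setF_nonempty hcdf hu1)
    intro x hx
    simp only [mem_setOf_eq] at hx
    rcases lt_or_ge x a with h | h
    · rw [clampF_of_lt h] at hx; linarith
    · rcases lt_or_ge x b with h2 | h2
      · rw [clampF_of_mem h h2] at hx
        have : gInv F u ≤ x := (gInv_le_iff hF hu0 hu1 x).2 hx
        exact max_le h (le_trans (min_le_left _ _) this)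
      · exact le_trans (cl_mem hab _).2 h2


/-- Pointwise error of clamping for a submodular nonnegative cost. -/
lemma clamp_err {c : ℝ × ℝ → ℝ} (hc_nonneg : ∀ p, 0 ≤ c p) (hP : PropP c)
    {a b a' b' : ℝ} (hab : a ≤ b) (hab' : a' ≤ b') (p : ℝ × ℝ) :
    c (cl a b p.1, cl a' b' p.2) ≤ c p +
      (if p ∈ Icc a b ×ˢ Icc a' b' then 0 else c (a, a') + c (b, b')) := by
  obtain ⟨x, y⟩ := p
  by_cases hin : (x, y) ∈ Icc a b ×ˢ Icc a' b'
  · rw [if_pos hin, cl_of_mem hin.1, cl_of_mem hin.2]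
    simp
  · rw [if_neg hin]
    simp only [mem_prod, mem_Icc] at hin
    push_neg at hin
    rcases lt_or_ge x a with hx | hx
    · rw [cl_of_lt hab hx]
      rcases lt_or_ge y a' with hy | hy
      · rw [cl_of_lt hab' hy]
        have := hc_nonneg (x, y); have := hc_nonneg (b, b'); linarith
      · rcases le_or_gt y b' with hy2 | hy2
        · -- x < a, a' ≤ y ≤ b' : P on [x,a] × [a',y]
          rw [cl_of_mem ⟨hy, hy2⟩]
          have h1 := hP hx.le hy
          have := hc_nonneg (x, a'); have := hc_nonneg (b, b')
          linarith
        · -- x < a, y > b'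
          rw [cl_of_gt hab' hy2]
          have h1 := hP hx.le (le_trans hab' hy2.le)
          have h2 := hP hab hy2.le
          have := hc_nonneg (x, a'); have := hc_nonneg (b, y)
          linarith
    · rcases le_or_gt x b with hx2 | hx2
      · rw [cl_of_mem ⟨hx, hx2⟩]
        rcases lt_or_ge y a' with hy | hy
        · -- a ≤ x ≤ b, y < a' : P on [a,x] × [y,a']
          rw [cl_of_lt hab' hy]
          have h1 := hP hx hy.le
          have := hc_nonneg (a, y); have := hc_nonneg (b, b')
          linarith
        · rcases le_or_gt y b' with hy2 | hy2
          · linarith [hin ⟨hx, hx2⟩ hy]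
          · -- a ≤ x ≤ b, y > b' : P on [x,b] × [b',y]
            rw [cl_of_gt hab' hy2]
            have h1 := hP hx2 hy2.le
            have := hc_nonneg (b, y); have := hc_nonneg (a, a')
            linarith
      · rw [cl_of_gt hab hx2]
        rcases lt_or_ge y a' with hy | hy
        · -- x > b, y < a'
          rw [cl_of_lt hab' hy]
          have h1 := hP hab hy.le
          have h2 := hP hx2.le (le_trans hy.le hab')
          have := hc_nonneg (a, y); have := hc_nonneg (x, b')
          linarith
        · rcases le_or_gt y b' with hy2 | hy2
          · -- x > b, a' ≤ y ≤ b' : P on [b,x] × [y,b']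
            rw [cl_of_mem ⟨hy, hy2⟩]
            have h1 := hP hx2.le hy2
            have := hc_nonneg (x, b'); have := hc_nonneg (a, a')
            linarith
          · -- x > b, y > b'
            rw [cl_of_gt hab' hy2]
            have := hc_nonneg (x, y); have := hc_nonneg (a, a'); linarith


/-- The comonotone coupling of two c.d.f.s. -/
noncomputable def comono (F G : ℝ → ℝ) : Measure (ℝ × ℝ) :=
  Measure.map (fun u => (gInv' F u, gInv' G u)) (volume.restrict (Ioo 0 1))

variable {F G : ℝ → ℝ}

lemma comono_map_measurable (hF : IsCDF F) (hG : IsCDF G) : Measurable (fun u => (gInv' F u, gInv' G u)) :=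
  (gInv'_measurable hF).prodMk (gInv'_measurable hG)

instance : IsProbabilityMeasure (volume.restrict (Ioo (0:ℝ) 1)) :=
  ⟨by simp⟩

lemma comono_isProb (hF : IsCDF F) (hG : IsCDF G) : IsProbabilityMeasure (comono F G) :=
  Measure.isProbabilityMeasure_map (comono_map_measurable hF hG).aemeasurable

lemma comono_apply_Iic (hF : IsCDF F) (hG : IsCDF G) (x y : ℝ) :
    comono F G (Iic (x, y)) = ENNReal.ofReal (min (F x) (G y)) := by
  rw [comono, Measure.map_apply (comono_map_measurable hF hG) measurableSet_Iic,
    Measure.restrict_apply ((comono_map_measurable hF hG) measurableSet_Iic)]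
  have hset : (fun u => (gInv' F u, gInv' G u)) ⁻¹' Iic (x, y) ∩ Ioo 0 1 =
      Ioo (0:ℝ) 1 ∩ Iic (min (F x) (G y)) := by
    ext u
    simp only [mem_inter_iff, mem_preimage, mem_Iic, Prod.le_def, mem_Ioo, le_min_iff]
    constructor
    · rintro ⟨⟨h1, h2⟩, hu⟩
      refine ⟨hu, ?_, ?_⟩
      · rw [← gInv_le_iff hF hu.1 hu.2]; simpa [gInv', hu] using h1
      · rw [← gInv_le_iff hG hu.1 hu.2]; simpa [gInv', hu] using h2
    · rintro ⟨hu, h1, h2⟩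
      refine ⟨⟨?_, ?_⟩, hu⟩
      · simpa [gInv', hu] using (gInv_le_iff hF hu.1 hu.2 x).2 h1
      · simpa [gInv', hu] using (gInv_le_iff hG hu.1 hu.2 y).2 h2
  rw [hset]
  exact vol_Ioo_inter_Iic (le_min (cdf_nonneg hF x) (cdf_nonneg hG y))
    (min_le_of_left_le (cdf_le_one hF x))

lemma comono_fst (hF : IsCDF F) (hG : IsCDF G) (x : ℝ) : (comono F G).fst (Iic x) = ENNReal.ofReal (F x) := by
  rw [Measure.fst_apply measurableSet_Iic, comono,
    Measure.map_apply (comono_map_measurable hF hG) (measurable_fst measurableSet_Iic),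
    Measure.restrict_apply ((comono_map_measurable hF hG) (measurable_fst measurableSet_Iic))]
  have hset : (fun u => (gInv' F u, gInv' G u)) ⁻¹' (Prod.fst ⁻¹' Iic x) ∩ Ioo 0 1 =
      Ioo (0:ℝ) 1 ∩ Iic (F x) := by
    ext u
    simp only [mem_inter_iff, mem_preimage, mem_Iic, mem_Ioo]
    constructor
    · rintro ⟨h1, hu⟩
      refine ⟨hu, ?_⟩
      rw [← gInv_le_iff hF hu.1 hu.2]; simpa [gInv', hu] using h1
    · rintro ⟨hu, h1⟩
      exact ⟨by simpa [gInv', hu] using (gInv_le_iff hF hu.1 hu.2 x).2 h1, hu⟩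
  rw [hset]
  exact vol_Ioo_inter_Iic (cdf_nonneg hF x) (cdf_le_one hF x)

lemma comono_snd (hF : IsCDF F) (hG : IsCDF G) (y : ℝ) : (comono F G).snd (Iic y) = ENNReal.ofReal (G y) := by
  rw [Measure.snd_apply measurableSet_Iic, comono,
    Measure.map_apply (comono_map_measurable hF hG) (measurable_snd measurableSet_Iic),
    Measure.restrict_apply ((comono_map_measurable hF hG) (measurable_snd measurableSet_Iic))]
  have hset : (fun u => (gInv' F u, gInv' G u)) ⁻¹' (Prod.snd ⁻¹' Iic y) ∩ Ioo 0 1 =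
      Ioo (0:ℝ) 1 ∩ Iic (G y) := by
    ext u
    simp only [mem_inter_iff, mem_preimage, mem_Iic, mem_Ioo]
    constructor
    · rintro ⟨h1, hu⟩
      refine ⟨hu, ?_⟩
      rw [← gInv_le_iff hG hu.1 hu.2]; simpa [gInv', hu] using h1
    · rintro ⟨hu, h1⟩
      exact ⟨by simpa [gInv', hu] using (gInv_le_iff hG hu.1 hu.2 y).2 h1, hu⟩
  rw [hset]
  exact vol_Ioo_inter_Iic (cdf_nonneg hG y) (cdf_le_one hG y)

lemma comono_lintegral (hF : IsCDF F) (hG : IsCDF G) {c : ℝ × ℝ → ℝ} (hc : Continuous c) :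
    ∫⁻ p, ENNReal.ofReal (c p) ∂(comono F G) =
      ∫⁻ u in Ioo (0:ℝ) 1, ENNReal.ofReal (c (gInv F u, gInv G u)) := by
  rw [comono, lintegral_map (by fun_prop) (comono_map_measurable hF hG)]
  refine lintegral_congr_ae ((ae_restrict_iff' measurableSet_Ioo).2 ?_)
  filter_upwards with u hu
  simp [gInv', hu]


lemma tele (f : ℕ → ℝ) {m n : ℕ} (h : m ≤ n) :
    ∑ i ∈ Finset.Ico m n, (f (i+1) - f i) = f n - f m := by
  rw [Finset.sum_Ico_eq_sub _ h, Finset.sum_range_sub, Finset.sum_range_sub]; ring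

lemma sum_ite_Ico (g : ℕ → ℝ) (N k : ℕ) :
    (∑ j ∈ Finset.range k, if N ≤ j then g j else 0) = ∑ j ∈ Finset.Ico N k, g j := by
  rw [← Finset.sum_filter]
  congr 1
  ext i; simp [Finset.mem_filter, Finset.mem_Ico, and_comm]

/-- The marginal measure of a lower half-plane in the first coordinate. -/
lemma fst_halfplane (ρ : Measure (ℝ × ℝ)) {F : ℝ → ℝ}
    (hρF : ∀ x, ρ.fst (Iic x) = ENNReal.ofReal (F x)) (x : ℝ) :
    ρ {q : ℝ × ℝ | q.1 ≤ x} = ENNReal.ofReal (F x) := by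
  rw [← hρF x, Measure.fst_apply measurableSet_Iic]; rfl

lemma snd_halfplane (ρ : Measure (ℝ × ℝ)) {G : ℝ → ℝ}
    (hρG : ∀ y, ρ.snd (Iic y) = ENNReal.ofReal (G y)) (y : ℝ) :
    ρ {q : ℝ × ℝ | q.2 ≤ y} = ENNReal.ofReal (G y) := by
  rw [← hρG y, Measure.snd_apply measurableSet_Iic]; rfl

lemma ae_mem_box {ρ : Measure (ℝ × ℝ)} [IsProbabilityMeasure ρ] {F G : ℝ → ℝ}
    (hρF : ∀ x, ρ.fst (Iic x) = ENNReal.ofReal (F x))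
    (hρG : ∀ y, ρ.snd (Iic y) = ENNReal.ofReal (G y))
    {L b L' b' : ℝ} (hFL : F L = 0) (hFb : F b = 1) (hGL : G L' = 0) (hGb : G b' = 1) :
    ∀ᵐ p ∂ρ, p ∈ Ioc L b ×ˢ Ioc L' b' := by
  have h1 : ρ {q : ℝ × ℝ | q.1 ≤ L} = 0 := by rw [fst_halfplane ρ hρF, hFL]; simp
  have h2 : ρ {q : ℝ × ℝ | q.2 ≤ L'} = 0 := by rw [snd_halfplane ρ hρG, hGL]; simp
  have h3 : ρ {q : ℝ × ℝ | ¬ q.1 ≤ b} = 0 := by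
    have : {q : ℝ × ℝ | ¬ q.1 ≤ b} = {q : ℝ × ℝ | q.1 ≤ b}ᶜ := rfl
    rw [this, measure_compl (by exact measurable_fst measurableSet_Iic) (measure_ne_top ρ _),
      fst_halfplane ρ hρF, hFb]
    simp
  have h4 : ρ {q : ℝ × ℝ | ¬ q.2 ≤ b'} = 0 := by
    have : {q : ℝ × ℝ | ¬ q.2 ≤ b'} = {q : ℝ × ℝ | q.2 ≤ b'}ᶜ := rfl
    rw [this, measure_compl (by exact measurable_snd measurableSet_Iic) (measure_ne_top ρ _),
      snd_halfplane ρ hρG, hGb]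
    simp
  rw [ae_iff]
  refine measure_mono_null (fun p hp => ?_)
    (measure_union_null (measure_union_null (measure_union_null h1 h2) h3) h4)
  simp only [mem_setOf_eq] at hp
  simp only [mem_union, mem_setOf_eq]
  by_contra hcon
  push_neg at hcon
  obtain ⟨⟨⟨hc1, hc2⟩, hc3⟩, hc4⟩ := hcon
  exact hp (Set.mem_prod.2 ⟨⟨hc1, hc3⟩, ⟨hc2, hc4⟩⟩)

/-- Core inequality: comparison of two couplings with compactly supported marginals. -/
lemma core (c : ℝ × ℝ → ℝ) (hc_cont : Continuous c) (hc_nonneg : ∀ p, 0 ≤ c p)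
    (hP : PropP c) (F G : ℝ → ℝ) (μ ν : Measure (ℝ × ℝ))
    (hμ : IsProbabilityMeasure μ) (hν : IsProbabilityMeasure ν)
    (hμF : ∀ x, μ.fst (Iic x) = ENNReal.ofReal (F x))
    (hμG : ∀ y, μ.snd (Iic y) = ENNReal.ofReal (G y))
    (hνF : ∀ x, ν.fst (Iic x) = ENNReal.ofReal (F x))
    (hνG : ∀ y, ν.snd (Iic y) = ENNReal.ofReal (G y))
    (hdom : ∀ x y, μ (Iic ((x, y) : ℝ × ℝ)) ≤ ν (Iic ((x, y) : ℝ × ℝ)))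
    (a b a' b' : ℝ) (hab : a ≤ b) (hab' : a' ≤ b')
    (hF0 : ∀ x, x < a → F x = 0) (hF1 : ∀ x, b ≤ x → F x = 1)
    (hG0 : ∀ y, y < a' → G y = 0) (hG1 : ∀ y, b' ≤ y → G y = 1) :
    ∫⁻ p, ENNReal.ofReal (c p) ∂ν ≤ ∫⁻ p, ENNReal.ofReal (c p) ∂μ := by
  classical
  set L : ℝ := a - 1 with hL
  set L' : ℝ := a' - 1 with hL'
  have hLb : L < b := by simp only [hL]; linarith
  have hL'b : L' < b' := by simp only [hL']; linarith
  set Q : Set (ℝ × ℝ) := Ioc L b ×ˢ Ioc L' b' with hQ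
  set K : Set (ℝ × ℝ) := Icc L b ×ˢ Icc L' b' with hK
  have hQK : Q ⊆ K := prod_mono Ioc_subset_Icc_self Ioc_subset_Icc_self
  have hKcomp : IsCompact K := (isCompact_Icc).prod isCompact_Icc
  have hKne : K.Nonempty := ⟨(b, b'), by simp [hK, mem_prod, hLb.le, hL'b.le]⟩
  -- bound on K
  obtain ⟨pmax, hpmaxK, hpmax⟩ := hKcomp.exists_isMaxOn hKne hc_cont.continuousOn
  set M : ℝ := c pmax with hM
  have hMb : ∀ p ∈ K, c p ≤ M := fun p hp => hpmax hp
  -- a.e. membership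
  have haeμ : ∀ᵐ p ∂μ, p ∈ Q :=
    ae_mem_box hμF hμG (hF0 L (by simp [hL])) (hF1 b le_rfl)
      (hG0 L' (by simp [hL'])) (hG1 b' le_rfl)
  have haeν : ∀ᵐ p ∂ν, p ∈ Q :=
    ae_mem_box hνF hνG (hF0 L (by simp [hL])) (hF1 b le_rfl)
      (hG0 L' (by simp [hL'])) (hG1 b' le_rfl)
  -- integrability
  have hint : ∀ (ρ : Measure (ℝ × ℝ)), IsProbabilityMeasure ρ → (∀ᵐ p ∂ρ, p ∈ Q) →
      Integrable c ρ := by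
    intro ρ hρ hae
    refine ⟨hc_cont.aestronglyMeasurable, HasFiniteIntegral.of_bounded (C := M) ?_⟩
    filter_upwards [hae] with p hp
    rw [Real.norm_eq_abs, abs_of_nonneg (hc_nonneg p)]
    exact hMb p (hQK hp)
  have hintμ := hint μ hμ haeμ
  have hintν := hint ν hν haeν
  -- convert to Bochner integrals
  rw [← ofReal_integral_eq_lintegral_ofReal hintμ (Filter.Eventually.of_forall hc_nonneg),
    ← ofReal_integral_eq_lintegral_ofReal hintν (Filter.Eventually.of_forall hc_nonneg)]
  refine ENNReal.ofReal_le_ofReal ?_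
  -- the real inequality, by an ε-argument
  refine le_of_forall_pos_le_add (fun ε hε => ?_)
  -- uniform continuity on K
  have hunif := hKcomp.uniformContinuousOn_of_continuous hc_cont.continuousOn
  rw [Metric.uniformContinuousOn_iff] at hunif
  obtain ⟨δ, hδ, hδc⟩ := hunif (ε/4) (by linarith)
  -- choose the number of grid points
  obtain ⟨k, hk⟩ := exists_nat_gt (max (2*(b - L)/δ) (2*(b' - L')/δ))
  have hk1 : 2*(b - L)/δ < k := lt_of_le_of_lt (le_max_left _ _) hk
  have hk2 : 2*(b' - L')/δ < k := lt_of_le_of_lt (le_max_right _ _) hk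
  have hk0 : 0 < (k : ℝ) := lt_of_lt_of_le (div_pos (by linarith) hδ) hk1.le
  set hx : ℝ := (b - L)/k with hhx
  set hy : ℝ := (b' - L')/k with hhy
  have hx0 : 0 < hx := div_pos (by linarith) hk0
  have hy0 : 0 < hy := div_pos (by linarith) hk0
  have hxδ : hx < δ/2 := by
    rw [hhx, div_lt_iff₀ hk0]
    rw [div_lt_iff₀ hδ] at hk1
    nlinarith
  have hyδ : hy < δ/2 := by
    rw [hhy, div_lt_iff₀ hk0]
    rw [div_lt_iff₀ hδ] at hk2
    nlinarith
  set X : ℕ → ℝ := fun i => L + i * hx with hX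
  set Y : ℕ → ℝ := fun j => L' + j * hy with hY
  have hXk : X k = b := by
    simp only [hX, hhx]; field_simp; ring
  have hYk : Y k = b' := by
    simp only [hY, hhy]; field_simp; ring
  have hXmono : Monotone X := fun i j hij => by
    simp only [hX]
    have : (i:ℝ) ≤ j := Nat.cast_le.2 hij
    nlinarith
  have hYmono : Monotone Y := fun i j hij => by
    simp only [hY]
    have : (i:ℝ) ≤ j := Nat.cast_le.2 hij
    nlinarith
  have hXmem : ∀ i : ℕ, i ≤ k → X i ∈ Icc L b := by
    intro i hik
    refine ⟨?_, ?_⟩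
    · simp only [hX]
      nlinarith [mul_nonneg (Nat.cast_nonneg i) hx0.le]
    · rw [← hXk]; exact hXmono hik
  have hYmem : ∀ j : ℕ, j ≤ k → Y j ∈ Icc L' b' := by
    intro j hjk
    refine ⟨?_, ?_⟩
    · simp only [hY]
      nlinarith [mul_nonneg (Nat.cast_nonneg j) hy0.le]
    · rw [← hYk]; exact hYmono hjk
  set Nx : ℝ → ℕ := fun t => ⌈(t - L)/hx⌉₊ with hNx
  set Ny : ℝ → ℕ := fun t => ⌈(t - L')/hy⌉₊ with hNy
  have hNx_iff : ∀ t ∈ Ioc L b, ∀ i : ℕ, (t ≤ X i ↔ Nx t ≤ i) := by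
    intro t ht i
    simp only [hNx, hX]
    rw [Nat.ceil_le, div_le_iff₀ hx0]
    constructor <;> intro h <;> nlinarith
  have hNy_iff : ∀ t ∈ Ioc L' b', ∀ j : ℕ, (t ≤ Y j ↔ Ny t ≤ j) := by
    intro t ht j
    simp only [hNy, hY]
    rw [Nat.ceil_le, div_le_iff₀ hy0]
    constructor <;> intro h <;> nlinarith
  have hNx1 : ∀ t ∈ Ioc L b, 1 ≤ Nx t := by
    intro t ht
    simp only [hNx]
    rw [Nat.one_le_ceil_iff]
    exact div_pos (by linarith [ht.1]) hx0
  have hNxk : ∀ t ∈ Ioc L b, Nx t ≤ k := by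
    intro t ht
    exact (hNx_iff t ht k).1 (by rw [hXk]; exact ht.2)
  have hNy1 : ∀ t ∈ Ioc L' b', 1 ≤ Ny t := by
    intro t ht
    simp only [hNy]
    rw [Nat.one_le_ceil_iff]
    exact div_pos (by linarith [ht.1]) hy0
  have hNyk : ∀ t ∈ Ioc L' b', Ny t ≤ k := by
    intro t ht
    exact (hNy_iff t ht k).1 (by rw [hYk]; exact ht.2)
  have hXNx : ∀ t ∈ Ioc L b, t ≤ X (Nx t) ∧ X (Nx t) < t + hx := by
    intro t ht
    constructor
    · exact (hNx_iff t ht (Nx t)).2 le_rfl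
    · simp only [hX, hNx]
      have h1 : (⌈(t - L)/hx⌉₊ : ℝ) < (t - L)/hx + 1 :=
        Nat.ceil_lt_add_one (le_of_lt (div_pos (by linarith [ht.1]) hx0))
      have h2 : ((t - L)/hx) * hx = t - L := div_mul_cancel₀ _ hx0.ne'
      nlinarith
  have hYNy : ∀ t ∈ Ioc L' b', t ≤ Y (Ny t) ∧ Y (Ny t) < t + hy := by
    intro t ht
    constructor
    · exact (hNy_iff t ht (Ny t)).2 le_rfl
    · simp only [hY, hNy]
      have h1 : (⌈(t - L')/hy⌉₊ : ℝ) < (t - L')/hy + 1 :=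
        Nat.ceil_lt_add_one (le_of_lt (div_pos (by linarith [ht.1]) hy0))
      have h2 : ((t - L')/hy) * hy = t - L' := div_mul_cancel₀ _ hy0.ne'
      nlinarith
  -- second differences
  set Δ2 : ℕ → ℕ → ℝ := fun i j =>
    c (X (i+1), Y (j+1)) - c (X (i+1), Y j) - c (X i, Y (j+1)) + c (X i, Y j) with hΔ2
  have hΔ2le : ∀ i j, Δ2 i j ≤ 0 := fun i j =>
    hP (hXmono (Nat.le_succ i)) (hYmono (Nat.le_succ j))
  -- the sets
  set Sx : ℕ → Set (ℝ × ℝ) := fun i => {q : ℝ × ℝ | q.1 ≤ X i} with hSx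
  set Sy : ℕ → Set (ℝ × ℝ) := fun j => {q : ℝ × ℝ | q.2 ≤ Y j} with hSy
  set Sxy : ℕ → ℕ → Set (ℝ × ℝ) := fun i j => {q : ℝ × ℝ | q.1 ≤ X i ∧ q.2 ≤ Y j} with hSxy
  have mSx : ∀ i, MeasurableSet (Sx i) := fun i => measurable_fst measurableSet_Iic
  have mSy : ∀ j, MeasurableSet (Sy j) := fun j => measurable_snd measurableSet_Iic
  have mSxy : ∀ i j, MeasurableSet (Sxy i j) := fun i j =>
    (measurable_fst measurableSet_Iic).inter (measurable_snd measurableSet_Iic)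
  have hSxyIic : ∀ i j, Sxy i j = Iic ((X i, Y j) : ℝ × ℝ) := by
    intro i j
    ext q
    simp only [hSxy, mem_setOf_eq, mem_Iic, Prod.le_def]
  -- the approximation function
  set s1 : ℝ × ℝ → ℝ := fun p =>
    ∑ j ∈ Finset.range k, (Sy j).indicator (fun _ => c (X k, Y (j+1)) - c (X k, Y j)) p with hs1
  set s2 : ℝ × ℝ → ℝ := fun p =>
    ∑ i ∈ Finset.range k, (Sx i).indicator (fun _ => c (X (i+1), Y k) - c (X i, Y k)) p with hs2
  set s3 : ℝ × ℝ → ℝ := fun p =>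
    ∑ i ∈ Finset.range k, ∑ j ∈ Finset.range k,
      (Sxy i j).indicator (fun _ => Δ2 i j) p with hs3
  set φ : ℝ × ℝ → ℝ := fun p => c (X k, Y k) - s1 p - s2 p + s3 p with hφ
  -- pointwise value on the box
  have hφQ : ∀ p ∈ Q, φ p = c (X (Nx p.1), Y (Ny p.2)) := by
    intro p hp
    obtain ⟨hp1, hp2⟩ := hp
    have e1 : s1 p = c (X k, Y k) - c (X k, Y (Ny p.2)) := by
      simp only [hs1]
      have : ∀ j ∈ Finset.range k,
          (Sy j).indicator (fun _ => c (X k, Y (j+1)) - c (X k, Y j)) p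
          = if Ny p.2 ≤ j then c (X k, Y (j+1)) - c (X k, Y j) else 0 := by
        intro j _
        rw [Set.indicator_apply]
        congr 1
        simp only [hSy, mem_setOf_eq, eq_iff_iff]
        exact hNy_iff p.2 hp2 j
      rw [Finset.sum_congr rfl this, sum_ite_Ico]
      exact tele (fun j => c (X k, Y j)) (hNyk p.2 hp2)
    have e2 : s2 p = c (X k, Y k) - c (X (Nx p.1), Y k) := by
      simp only [hs2]
      have : ∀ i ∈ Finset.range k,
          (Sx i).indicator (fun _ => c (X (i+1), Y k) - c (X i, Y k)) p
          = if Nx p.1 ≤ i then c (X (i+1), Y k) - c (X i, Y k) else 0 := by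
        intro i _
        rw [Set.indicator_apply]
        congr 1
        simp only [hSx, mem_setOf_eq, eq_iff_iff]
        exact hNx_iff p.1 hp1 i
      rw [Finset.sum_congr rfl this, sum_ite_Ico]
      exact tele (fun i => c (X i, Y k)) (hNxk p.1 hp1)
    have e3 : s3 p = c (X k, Y k) - c (X (Nx p.1), Y k)
          - (c (X k, Y (Ny p.2)) - c (X (Nx p.1), Y (Ny p.2))) := by
      simp only [hs3]
      have hin : ∀ i ∈ Finset.range k, ∑ j ∈ Finset.range k,
          (Sxy i j).indicator (fun _ => Δ2 i j) p
          = if Nx p.1 ≤ i then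
              (c (X (i+1), Y k) - c (X i, Y k))
                - (c (X (i+1), Y (Ny p.2)) - c (X i, Y (Ny p.2))) else 0 := by
        intro i _
        have hmem : ∀ j, (p ∈ Sxy i j ↔ (Nx p.1 ≤ i ∧ Ny p.2 ≤ j)) := by
          intro j
          simp only [hSxy, mem_setOf_eq]
          rw [hNx_iff p.1 hp1 i, hNy_iff p.2 hp2 j]
        by_cases hi : Nx p.1 ≤ i
        · rw [if_pos hi]
          have hj' : ∀ j ∈ Finset.range k, (Sxy i j).indicator (fun _ => Δ2 i j) p
              = if Ny p.2 ≤ j then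
                  (c (X (i+1), Y (j+1)) - c (X i, Y (j+1)))
                    - (c (X (i+1), Y j) - c (X i, Y j)) else 0 := by
            intro j _
            rw [Set.indicator_apply]
            by_cases hj : Ny p.2 ≤ j
            · rw [if_pos ((hmem j).2 ⟨hi, hj⟩), if_pos hj]
              simp only [hΔ2]; ring
            · rw [if_neg (fun hm => hj ((hmem j).1 hm).2), if_neg hj]
          rw [Finset.sum_congr rfl hj', sum_ite_Ico]
          exact tele (fun j => c (X (i+1), Y j) - c (X i, Y j)) (hNyk p.2 hp2)
        · rw [if_neg hi]
          apply Finset.sum_eq_zero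
          intro j _
          rw [Set.indicator_apply, if_neg (fun hm => hi ((hmem j).1 hm).1)]
      rw [Finset.sum_congr rfl hin, sum_ite_Ico, Finset.sum_sub_distrib,
        tele (fun i => c (X i, Y k)) (hNxk p.1 hp1),
        tele (fun i => c (X i, Y (Ny p.2))) (hNxk p.1 hp1)]
    simp only [hφ]
    rw [e1, e2, e3]
    ring
  -- integral formula
  have hφint : ∀ (ρ : Measure (ℝ × ℝ)), IsProbabilityMeasure ρ → Integrable φ ρ ∧
      ∫ p, φ p ∂ρ = c (X k, Y k)
        - ∑ j ∈ Finset.range k, (ρ (Sy j)).toReal * (c (X k, Y (j+1)) - c (X k, Y j))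
        - ∑ i ∈ Finset.range k, (ρ (Sx i)).toReal * (c (X (i+1), Y k) - c (X i, Y k))
        + ∑ i ∈ Finset.range k, ∑ j ∈ Finset.range k, (ρ (Sxy i j)).toReal * Δ2 i j := by
    intro ρ hρ
    haveI := hρ
    have i1 : Integrable s1 ρ :=
      integrable_finset_sum _ (fun j _ => (integrable_const _).indicator (mSy j))
    have i2 : Integrable s2 ρ :=
      integrable_finset_sum _ (fun i _ => (integrable_const _).indicator (mSx i))
    have i3 : Integrable s3 ρ :=
      integrable_finset_sum _ (fun i _ =>
        integrable_finset_sum _ (fun j _ => (integrable_const _).indicator (mSxy i j)))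
    have i12 : Integrable (fun p => c (X k, Y k) - s1 p - s2 p) ρ :=
      ((integrable_const _).sub i1).sub i2
    refine ⟨i12.add i3, ?_⟩
    have key1 : ∫ p, φ p ∂ρ = (∫ p, (c (X k, Y k) - s1 p - s2 p) ∂ρ) + ∫ p, s3 p ∂ρ :=
      integral_add i12 i3
    have key2 : ∫ p, (c (X k, Y k) - s1 p - s2 p) ∂ρ
        = (∫ p, (c (X k, Y k) - s1 p) ∂ρ) - ∫ p, s2 p ∂ρ :=
      integral_sub ((integrable_const _).sub i1) i2
    have key3 : ∫ p, (c (X k, Y k) - s1 p) ∂ρ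
        = (∫ _p, c (X k, Y k) ∂ρ) - ∫ p, s1 p ∂ρ :=
      integral_sub (integrable_const _) i1
    have keyc : ∫ _p, c (X k, Y k) ∂ρ = c (X k, Y k) := by
      rw [integral_const]; simp
    have v1 : ∫ p, s1 p ∂ρ
        = ∑ j ∈ Finset.range k, (ρ (Sy j)).toReal * (c (X k, Y (j+1)) - c (X k, Y j)) := by
      rw [show (∫ p, s1 p ∂ρ) = ∑ j ∈ Finset.range k, ∫ p,
          (Sy j).indicator (fun _ => c (X k, Y (j+1)) - c (X k, Y j)) p ∂ρ from
        integral_finset_sum _ (fun j _ => (integrable_const _).indicator (mSy j))]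
      exact Finset.sum_congr rfl (fun j _ => by
        rw [integral_indicator_const _ (mSy j), smul_eq_mul]; rfl)
    have v2 : ∫ p, s2 p ∂ρ
        = ∑ i ∈ Finset.range k, (ρ (Sx i)).toReal * (c (X (i+1), Y k) - c (X i, Y k)) := by
      rw [show (∫ p, s2 p ∂ρ) = ∑ i ∈ Finset.range k, ∫ p,
          (Sx i).indicator (fun _ => c (X (i+1), Y k) - c (X i, Y k)) p ∂ρ from
        integral_finset_sum _ (fun i _ => (integrable_const _).indicator (mSx i))]
      exact Finset.sum_congr rfl (fun i _ => by
        rw [integral_indicator_const _ (mSx i), smul_eq_mul]; rfl)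
    have v3 : ∫ p, s3 p ∂ρ
        = ∑ i ∈ Finset.range k, ∑ j ∈ Finset.range k, (ρ (Sxy i j)).toReal * Δ2 i j := by
      rw [show (∫ p, s3 p ∂ρ) = ∑ i ∈ Finset.range k, ∫ p, (∑ j ∈ Finset.range k,
          (Sxy i j).indicator (fun _ => Δ2 i j) p) ∂ρ from
        integral_finset_sum _ (fun i _ =>
          integrable_finset_sum _ (fun j _ => (integrable_const _).indicator (mSxy i j)))]
      refine Finset.sum_congr rfl (fun i _ => ?_)
      rw [show (∫ p, (∑ j ∈ Finset.range k, (Sxy i j).indicator (fun _ => Δ2 i j) p) ∂ρ)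
          = ∑ j ∈ Finset.range k, ∫ p, (Sxy i j).indicator (fun _ => Δ2 i j) p ∂ρ from
        integral_finset_sum _ (fun j _ => (integrable_const _).indicator (mSxy i j))]
      exact Finset.sum_congr rfl (fun j _ => by
        rw [integral_indicator_const _ (mSxy i j), smul_eq_mul]; rfl)
    rw [key1, key2, key3, keyc, v1, v2, v3]
  -- comparison of the two integrals of φ
  have hφle : ∫ p, φ p ∂ν ≤ ∫ p, φ p ∂μ := by
    rw [(hφint μ hμ).2, (hφint ν hν).2]
    have m1 : ∀ j, ν (Sy j) = μ (Sy j) := fun j => by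
      rw [hSy, snd_halfplane ν hνG, snd_halfplane μ hμG]
    have m2 : ∀ i, ν (Sx i) = μ (Sx i) := fun i => by
      rw [hSx, fst_halfplane ν hνF, fst_halfplane μ hμF]
    have m3 : ∑ i ∈ Finset.range k, ∑ j ∈ Finset.range k, (ν (Sxy i j)).toReal * Δ2 i j
        ≤ ∑ i ∈ Finset.range k, ∑ j ∈ Finset.range k, (μ (Sxy i j)).toReal * Δ2 i j := by
      refine Finset.sum_le_sum (fun i _ => Finset.sum_le_sum (fun j _ => ?_))
      have hd : μ (Sxy i j) ≤ ν (Sxy i j) := by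
        rw [hSxyIic i j]; exact hdom (X i) (Y j)
      have htr : (μ (Sxy i j)).toReal ≤ (ν (Sxy i j)).toReal :=
        ENNReal.toReal_mono (measure_ne_top ν _) hd
      nlinarith [hΔ2le i j]
    have e1 : ∑ j ∈ Finset.range k, (ν (Sy j)).toReal * (c (X k, Y (j+1)) - c (X k, Y j))
        = ∑ j ∈ Finset.range k, (μ (Sy j)).toReal * (c (X k, Y (j+1)) - c (X k, Y j)) :=
      Finset.sum_congr rfl (fun j _ => by rw [m1 j])
    have e2 : ∑ i ∈ Finset.range k, (ν (Sx i)).toReal * (c (X (i+1), Y k) - c (X i, Y k))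
        = ∑ i ∈ Finset.range k, (μ (Sx i)).toReal * (c (X (i+1), Y k) - c (X i, Y k)) :=
      Finset.sum_congr rfl (fun i _ => by rw [m2 i])
    rw [e1, e2]
    linarith
  -- approximation of c by φ
  have happrox : ∀ (ρ : Measure (ℝ × ℝ)), IsProbabilityMeasure ρ → (∀ᵐ p ∂ρ, p ∈ Q) →
      Integrable c ρ → |∫ p, c p ∂ρ - ∫ p, φ p ∂ρ| ≤ ε/4 := by
    intro ρ hρ hae hci
    haveI := hρ
    have hφi := (hφint ρ hρ).1
    rw [← integral_sub hci hφi]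
    have hbd : ∀ᵐ p ∂ρ, ‖c p - φ p‖ ≤ ε/4 := by
      filter_upwards [hae] with p hp
      rw [hφQ p hp]
      obtain ⟨hp1, hp2⟩ := hp
      have hgrid : (X (Nx p.1), Y (Ny p.2)) ∈ K := by
        refine Set.mem_prod.2 ⟨hXmem _ (hNxk p.1 hp1), hYmem _ (hNyk p.2 hp2)⟩
      have hpK : p ∈ K := hQK (Set.mem_prod.2 ⟨hp1, hp2⟩)
      have hd1 := hXNx p.1 hp1
      have hd2 := hYNy p.2 hp2
      have hdist : dist p (X (Nx p.1), Y (Ny p.2)) < δ := by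
        rw [Prod.dist_eq]
        refine max_lt ?_ ?_
        · rw [Real.dist_eq, abs_lt]; constructor <;> [linarith [hd1.2]; linarith [hd1.1, hd1.2]]
        · rw [Real.dist_eq, abs_lt]; constructor <;> [linarith [hd2.2]; linarith [hd2.1, hd2.2]]
      have := hδc p hpK _ hgrid hdist
      rw [Real.dist_eq] at this
      rw [Real.norm_eq_abs]
      linarith [this]
    calc |∫ p, (c p - φ p) ∂ρ| ≤ ε/4 * (ρ univ).toReal :=
          norm_integral_le_of_norm_le_const hbd
      _ = ε/4 := by simp
  have h1 := happrox μ hμ haeμ hintμ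
  have h2 := happrox ν hν haeν hintν
  rw [abs_le] at h1 h2
  linarith


/-- Fréchet–Hoeffding upper bound. -/
lemma FH {F G : ℝ → ℝ} (ρ : Measure (ℝ × ℝ)) [IsProbabilityMeasure ρ]
    (hρF : ∀ x, ρ.fst (Iic x) = ENNReal.ofReal (F x))
    (hρG : ∀ y, ρ.snd (Iic y) = ENNReal.ofReal (G y)) (x y : ℝ) :
    ρ (Iic ((x, y) : ℝ × ℝ)) ≤ ENNReal.ofReal (min (F x) (G y)) := by
  have h1 : ρ (Iic ((x, y) : ℝ × ℝ)) ≤ ENNReal.ofReal (F x) := by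
    rw [← hρF x, Measure.fst_apply measurableSet_Iic]
    exact measure_mono (fun p hp => hp.1)
  have h2 : ρ (Iic ((x, y) : ℝ × ℝ)) ≤ ENNReal.ofReal (G y) := by
    rw [← hρG y, Measure.snd_apply measurableSet_Iic]
    exact measure_mono (fun p hp => hp.2)
  rcases min_cases (F x) (G y) with ⟨h, _⟩ | ⟨h, _⟩ <;> rw [h]
  · exact h1
  · exact h2

lemma cl_measurable (a b a' b' : ℝ) :
    Measurable (fun p : ℝ × ℝ => (cl a b p.1, cl a' b' p.2)) :=
  (((cl_continuous a b).comp continuous_fst).prodMk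
    ((cl_continuous a' b').comp continuous_snd)).measurable

/-- The first marginal of the clamped coupling. -/
lemma clamped_fst (ρ : Measure (ℝ × ℝ)) [IsProbabilityMeasure ρ] {F : ℝ → ℝ}
    (hρF : ∀ x, ρ.fst (Iic x) = ENNReal.ofReal (F x)) {a b : ℝ} (hab : a ≤ b) (a' b' : ℝ)
    (x : ℝ) :
    (Measure.map (fun p : ℝ × ℝ => (cl a b p.1, cl a' b' p.2)) ρ).fst (Iic x) =
      ENNReal.ofReal (clampF F a b x) := by
  rw [Measure.fst_apply measurableSet_Iic,
    Measure.map_apply (cl_measurable a b a' b') (measurable_fst measurableSet_Iic)]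
  rcases lt_or_ge x a with h | h
  · have : (fun p : ℝ × ℝ => (cl a b p.1, cl a' b' p.2)) ⁻¹' (Prod.fst ⁻¹' Iic x) = ∅ := by
      ext p
      simp only [mem_preimage, mem_Iic, mem_empty_iff_false, iff_false, not_le]
      exact lt_of_lt_of_le h (cl_mem hab p.1).1
    rw [this, clampF_of_lt h]
    simp
  · rcases lt_or_ge x b with h2 | h2
    · have : (fun p : ℝ × ℝ => (cl a b p.1, cl a' b' p.2)) ⁻¹' (Prod.fst ⁻¹' Iic x) =
          Prod.fst ⁻¹' Iic x := by
        ext p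
        simp only [mem_preimage, mem_Iic]
        constructor
        · intro hp
          by_contra hc
          push_neg at hc
          have : x < min p.1 b := lt_min hc h2
          have : x < cl a b p.1 := lt_of_lt_of_le this (le_max_right _ _)
          linarith
        · intro hp
          exact max_le h (le_trans (min_le_left _ _) hp)
      rw [this, clampF_of_mem h h2, ← hρF x, Measure.fst_apply measurableSet_Iic]
    · have : (fun p : ℝ × ℝ => (cl a b p.1, cl a' b' p.2)) ⁻¹' (Prod.fst ⁻¹' Iic x) = univ := by
        ext p
        simp only [mem_preimage, mem_Iic, mem_univ, iff_true]
        exact le_trans (cl_mem hab p.1).2 h2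
      rw [this, clampF_of_ge hab h2]
      simp

lemma clamped_snd (ρ : Measure (ℝ × ℝ)) [IsProbabilityMeasure ρ] {G : ℝ → ℝ}
    (hρG : ∀ y, ρ.snd (Iic y) = ENNReal.ofReal (G y)) (a b : ℝ) {a' b' : ℝ} (hab' : a' ≤ b')
    (y : ℝ) :
    (Measure.map (fun p : ℝ × ℝ => (cl a b p.1, cl a' b' p.2)) ρ).snd (Iic y) =
      ENNReal.ofReal (clampF G a' b' y) := by
  rw [Measure.snd_apply measurableSet_Iic,
    Measure.map_apply (cl_measurable a b a' b') (measurable_snd measurableSet_Iic)]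
  rcases lt_or_ge y a' with h | h
  · have : (fun p : ℝ × ℝ => (cl a b p.1, cl a' b' p.2)) ⁻¹' (Prod.snd ⁻¹' Iic y) = ∅ := by
      ext p
      simp only [mem_preimage, mem_Iic, mem_empty_iff_false, iff_false, not_le]
      exact lt_of_lt_of_le h (cl_mem hab' p.2).1
    rw [this, clampF_of_lt h]
    simp
  · rcases lt_or_ge y b' with h2 | h2
    · have : (fun p : ℝ × ℝ => (cl a b p.1, cl a' b' p.2)) ⁻¹' (Prod.snd ⁻¹' Iic y) =
          Prod.snd ⁻¹' Iic y := by
        ext p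
        simp only [mem_preimage, mem_Iic]
        constructor
        · intro hp
          by_contra hc
          push_neg at hc
          have : y < min p.2 b' := lt_min hc h2
          have : y < cl a' b' p.2 := lt_of_lt_of_le this (le_max_right _ _)
          linarith
        · intro hp
          exact max_le h (le_trans (min_le_left _ _) hp)
      rw [this, clampF_of_mem h h2, ← hρG y, Measure.snd_apply measurableSet_Iic]
    · have : (fun p : ℝ × ℝ => (cl a b p.1, cl a' b' p.2)) ⁻¹' (Prod.snd ⁻¹' Iic y) = univ := by
        ext p
        simp only [mem_preimage, mem_Iic, mem_univ, iff_true]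
        exact le_trans (cl_mem hab' p.2).2 h2
      rw [this, clampF_of_ge hab' h2]
      simp

set_option maxHeartbeats 1000000 in
lemma master (c : ℝ × ℝ → ℝ) (hc_cont : Continuous c) (hc_nonneg : ∀ p, 0 ≤ c p)
    (hP : PropP c) (F G : ℝ → ℝ) (hF : IsCDF F) (hG : IsCDF G)
    (hfin : (∫⁻ u in Ioo (0 : ℝ) 1, ENNReal.ofReal (c (gInv F u, gInv G u))) < ⊤)
    (μ : Measure (ℝ × ℝ)) (hμ : IsProbabilityMeasure μ)
    (hμF : ∀ x, μ.fst (Iic x) = ENNReal.ofReal (F x))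
    (hμG : ∀ y, μ.snd (Iic y) = ENNReal.ofReal (G y)) :
    (∫⁻ u in Ioo (0 : ℝ) 1, ENNReal.ofReal (c (gInv F u, gInv G u))) ≤
      ∫⁻ p, ENNReal.ofReal (c p) ∂μ := by
  haveI := hμ
  classical
  set g' : ℝ → ℝ≥0∞ := fun u => ENNReal.ofReal (c (gInv' F u, gInv' G u)) with hg'
  have hg'meas : Measurable g' :=
    ENNReal.measurable_ofReal.comp (hc_cont.measurable.comp
      ((gInv'_measurable hF).prodMk (gInv'_measurable hG)))
  have hcong : ∀ᵐ u ∂(volume.restrict (Ioo (0:ℝ) 1)),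
      ENNReal.ofReal (c (gInv F u, gInv G u)) = g' u := by
    refine (ae_restrict_iff' measurableSet_Ioo).2 (Filter.Eventually.of_forall fun u hu => ?_)
    simp only [hg', gInv', if_pos hu]
  set m : Measure ℝ := (volume.restrict (Ioo (0:ℝ) 1)).withDensity g' with hm
  have hmA : ∀ {A : Set ℝ}, MeasurableSet A → m A = ∫⁻ u in A ∩ Ioo (0:ℝ) 1, g' u := by
    intro A hA
    rw [hm, withDensity_apply _ hA, Measure.restrict_restrict hA]
  have hRm : (∫⁻ u in Ioo (0 : ℝ) 1, ENNReal.ofReal (c (gInv F u, gInv G u))) = m univ := by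
    rw [hmA MeasurableSet.univ, univ_inter]
    exact lintegral_congr_ae hcong
  rw [hRm] at hfin ⊢
  refine ENNReal.le_of_forall_pos_le_add fun ε hε hfinμ => ?_
  set εr : ℝ := (ε : ℝ) with hεr
  have hεr0 : 0 < εr := by exact_mod_cast hε
  -- choice of the tail cutoff s
  have htail : Filter.Tendsto (fun n : ℕ => m ((Ioo (1/((n:ℝ)+3)) (1 - 1/((n:ℝ)+3)))ᶜ))
      Filter.atTop (nhds 0) := by
    have hconv := MeasureTheory.tendsto_measure_iInter_atTop (μ := m)
      (s := fun n : ℕ => (Ioo (1/((n:ℝ)+3)) (1 - 1/((n:ℝ)+3)))ᶜ)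
      (fun n => (measurableSet_Ioo.compl).nullMeasurableSet)
      (fun i j hij => compl_subset_compl.2 (Ioo_subset_Ioo
        (by
          have h3 : (0:ℝ) < (i:ℝ) + 3 := by positivity
          have : (i:ℝ) ≤ (j:ℝ) := Nat.cast_le.2 hij
          have h4 : (0:ℝ) < (j:ℝ) + 3 := by positivity
          rw [div_le_div_iff₀ h4 h3]
          linarith)
        (by
          have h3 : (0:ℝ) < (i:ℝ) + 3 := by positivity
          have : (i:ℝ) ≤ (j:ℝ) := Nat.cast_le.2 hij
          have h4 : (0:ℝ) < (j:ℝ) + 3 := by positivity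
          have : 1/((j:ℝ)+3) ≤ 1/((i:ℝ)+3) := by
            rw [div_le_div_iff₀ h4 h3]; linarith
          linarith)))
      ⟨0, (lt_of_le_of_lt (measure_mono (subset_univ _)) hfin).ne⟩
    have hint : (⋂ n : ℕ, (Ioo (1/((n:ℝ)+3)) (1 - 1/((n:ℝ)+3)))ᶜ) = (Ioo (0:ℝ) 1)ᶜ := by
      ext x
      simp only [mem_iInter, mem_compl_iff, mem_Ioo, not_and, not_lt]
      constructor
      · intro h
        intro hx0
        by_contra hx1
        push_neg at hx1
        obtain ⟨n, hn⟩ := exists_nat_one_div_lt (lt_min hx0 (by linarith : 0 < 1 - x))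
        have h3 : (0:ℝ) < (n:ℝ) + 1 := by positivity
        have h4 : (0:ℝ) < (n:ℝ) + 3 := by positivity
        have hle : 1/((n:ℝ)+3) ≤ 1/((n:ℝ)+1) := by
          rw [div_le_div_iff₀ h4 h3]; linarith
        have hlt1 : 1/((n:ℝ)+3) < x := lt_of_le_of_lt hle (lt_of_lt_of_le hn (min_le_left _ _))
        have hlt2 : 1/((n:ℝ)+3) < 1 - x := lt_of_le_of_lt hle (lt_of_lt_of_le hn (min_le_right _ _))
        have := h n hlt1
        linarith
      · intro h n hn
        have h4 : (0:ℝ) < (n:ℝ) + 3 := by positivity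
        have hpos : 0 < 1/((n:ℝ)+3) := by positivity
        have hx0 : 0 < x := lt_trans hpos hn
        have := h hx0
        linarith
    have hz : m ((Ioo (0:ℝ) 1)ᶜ) = 0 := by
      rw [hmA measurableSet_Ioo.compl, compl_inter_self, Measure.restrict_empty,
        lintegral_zero_measure]
    rw [hint, hz] at hconv
    exact hconv
  have hev1 : ∀ᶠ n : ℕ in Filter.atTop,
      m ((Ioo (1/((n:ℝ)+3)) (1 - 1/((n:ℝ)+3)))ᶜ) < ENNReal.ofReal (εr/66) :=
    htail.eventually_lt_const (by simp [ENNReal.ofReal_pos]; positivity)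
  have hev2 : ∀ᶠ n : ℕ in Filter.atTop,
      (1/((n:ℝ)+3) ≤ εr/18 ∧ 1/((n:ℝ)+3) ≤ 1/3) := by
    rw [Filter.eventually_atTop]
    refine ⟨⌈18/εr⌉₊, fun n hn => ?_⟩
    have h4 : (0:ℝ) < (n:ℝ) + 3 := by positivity
    have hcl : 18/εr ≤ (n:ℝ) := le_trans (Nat.le_ceil _) (Nat.cast_le.2 hn)
    constructor
    · rw [div_le_div_iff₀ h4 (by positivity : (0:ℝ) < 18)]
      rw [div_le_iff₀ hεr0] at hcl
      nlinarith
    · rw [div_le_div_iff₀ h4 (by norm_num : (0:ℝ) < 3)]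
      have : (0:ℝ) ≤ n := Nat.cast_nonneg n
      linarith
  obtain ⟨n, hn1, hn2, hn3⟩ := (hev1.and hev2).exists
  set s : ℝ := 1/((n:ℝ)+3) with hs
  have hs0 : 0 < s := by positivity
  set Tail : ℝ≥0∞ := m ((Ioo s (1-s))ᶜ) with hTail
  have hTailfin : Tail ≠ ⊤ := (lt_of_lt_of_le hn1 le_top).ne
  set T : ℝ := Tail.toReal with hT
  have hT0 : 0 ≤ T := ENNReal.toReal_nonneg
  have hTle : T ≤ εr/66 := by
    have := ENNReal.toReal_mono (by simp [ENNReal.ofReal_ne_top]) hn1.le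
    rwa [ENNReal.toReal_ofReal (by positivity)] at this
  have hTailT : Tail = ENNReal.ofReal T := (ENNReal.ofReal_toReal hTailfin).symm
  -- selection of δ
  have hrefl : (∫⁻ u in Ioo (s/2) s, g' (1 - u)) = ∫⁻ u in Ioo (1-s) (1-s/2), g' u := by
    have hemb : MeasurableEmbedding (fun x : ℝ => 1 - x) :=
      (Homeomorph.subLeft (1:ℝ)).isClosedEmbedding.measurableEmbedding
    have hmp : MeasurePreserving (fun x : ℝ => 1 - x) volume volume :=
      Measure.measurePreserving_sub_left volume 1
    have hpre : (fun x : ℝ => 1 - x) ⁻¹' (Ioo (1-s) (1-s/2)) = Ioo (s/2) s := by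
      ext x
      simp only [mem_preimage, mem_Ioo]
      constructor <;> rintro ⟨h1, h2⟩ <;> constructor <;> linarith
    rw [← hpre]
    exact hmp.setLIntegral_comp_preimage_emb hemb _ _
  have hsub1 : Ioo (s/2) s ⊆ Ioo (0:ℝ) 1 := fun u hu => by
    constructor
    · linarith [hu.1, hs0]
    · have : s ≤ 1/3 := hn3
      linarith [hu.2]
  have hsub1' : Ioo (s/2) s ⊆ (Ioo s (1-s))ᶜ := fun u hu => by
    simp only [mem_compl_iff, mem_Ioo, not_and, not_lt]
    intro hc
    linarith [hu.2]
  have hsub2 : Ioo (1-s) (1-s/2) ⊆ Ioo (0:ℝ) 1 := fun u hu => by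
    constructor
    · have : s ≤ 1/3 := hn3
      linarith [hu.1]
    · linarith [hu.2, hs0]
  have hsub2' : Ioo (1-s) (1-s/2) ⊆ (Ioo s (1-s))ᶜ := fun u hu => by
    simp only [mem_compl_iff, mem_Ioo, not_and, not_lt]
    intro hc
    linarith [hu.1]
  have hδsel : ∃ δ ∈ Ioo (s/2) s, g' δ + g' (1 - δ) ≤ ENNReal.ofReal (4*T/s + 1) := by
    by_contra hno
    push_neg at hno
    have h1 : ENNReal.ofReal (4*T/s+1) * volume (Ioo (s/2) s)
        ≤ ∫⁻ u in Ioo (s/2) s, (g' u + g' (1-u)) := by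
      rw [← setLIntegral_const]
      refine setLIntegral_mono (hg'meas.add (hg'meas.comp (by fun_prop))) ?_
      exact fun u hu => (hno u hu).le
    have h2 : (∫⁻ u in Ioo (s/2) s, (g' u + g' (1-u))) ≤ Tail + Tail := by
      rw [lintegral_add_left hg'meas, hrefl]
      have e1 : (∫⁻ u in Ioo (s/2) s, g' u) = m (Ioo (s/2) s) := by
        rw [hmA measurableSet_Ioo, inter_eq_self_of_subset_left hsub1]
      have e2 : (∫⁻ u in Ioo (1-s) (1-s/2), g' u) = m (Ioo (1-s) (1-s/2)) := by
        rw [hmA measurableSet_Ioo, inter_eq_self_of_subset_left hsub2]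
      rw [e1, e2]
      exact add_le_add (measure_mono hsub1') (measure_mono hsub2')
    rw [Real.volume_Ioo] at h1
    have hvol : s - s/2 = s/2 := by ring
    rw [hvol, ← ENNReal.ofReal_mul (by positivity)] at h1
    have hmul : (4*T/s+1) * (s/2) = 2*T + s/2 := by field_simp; ring
    rw [hmul] at h1
    rw [hTailT, ← ENNReal.ofReal_add hT0 hT0] at h2
    have := le_trans h1 h2
    have hle := (ENNReal.ofReal_le_ofReal_iff (by positivity)).1 this
    linarith
  obtain ⟨δ, hδmem, hδbd⟩ := hδsel
  have hδ0 : 0 < δ := lt_trans (by positivity) hδmem.1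
  have hδs : δ < s := hδmem.2
  have hs13 : s ≤ 1/3 := hn3
  have hδ1 : δ < 1 := by linarith
  have h1δ0 : 0 < 1 - δ := by linarith
  have h1δ1 : 1 - δ < 1 := by linarith
  have hδle : δ ≤ 1 - δ := by linarith
  set a := gInv F δ with ha
  set b := gInv F (1-δ) with hb
  set a' := gInv G δ with ha'
  set b' := gInv G (1-δ) with hb'
  have hab : a ≤ b := gInv_mono hF hδ0 h1δ1 hδle
  have hab' : a' ≤ b' := gInv_mono hG hδ0 h1δ1 hδle
  set K : ℝ := c (a, a') + c (b, b') with hK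
  have hK0 : 0 ≤ K := add_nonneg (hc_nonneg _) (hc_nonneg _)
  have hKbd : K ≤ 4*T/s + 1 := by
    have e1 : g' δ = ENNReal.ofReal (c (a, a')) := by
      simp only [hg', gInv', if_pos (show δ ∈ Ioo (0:ℝ) 1 from ⟨hδ0, hδ1⟩)]; rfl
    have e2 : g' (1-δ) = ENNReal.ofReal (c (b, b')) := by
      simp only [hg', gInv', if_pos (show (1-δ) ∈ Ioo (0:ℝ) 1 from ⟨h1δ0, h1δ1⟩)]; rfl
    rw [e1, e2, ← ENNReal.ofReal_add (hc_nonneg _) (hc_nonneg _)] at hδbd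
    exact (ENNReal.ofReal_le_ofReal_iff (by positivity)).1 hδbd
  -- the clamped coupling and the clamped comonotone coupling
  have hFb : IsCDF (clampF F a b) := isCDF_clampF hF hab
  have hGb : IsCDF (clampF G a' b') := isCDF_clampF hG hab'
  set μb := Measure.map (fun p : ℝ × ℝ => (cl a b p.1, cl a' b' p.2)) μ with hμb
  haveI hμbP : IsProbabilityMeasure μb :=
    Measure.isProbabilityMeasure_map (cl_measurable a b a' b').aemeasurable
  haveI hνbP : IsProbabilityMeasure (comono (clampF F a b) (clampF G a' b')) :=
    comono_isProb hFb hGb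
  have hμbF : ∀ x, μb.fst (Iic x) = ENNReal.ofReal (clampF F a b x) :=
    fun x => clamped_fst μ hμF hab a' b' x
  have hμbG : ∀ y, μb.snd (Iic y) = ENNReal.ofReal (clampF G a' b' y) :=
    fun y => clamped_snd μ hμG a b hab' y
  have hcore : ∫⁻ p, ENNReal.ofReal (c p) ∂(comono (clampF F a b) (clampF G a' b'))
      ≤ ∫⁻ p, ENNReal.ofReal (c p) ∂μb := by
    refine core c hc_cont hc_nonneg hP (clampF F a b) (clampF G a' b') μb _ hμbP hνbP
      hμbF hμbG (comono_fst hFb hGb) (comono_snd hFb hGb)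
      (fun x y => le_trans (FH μb hμbF hμbG x y) (comono_apply_Iic hFb hGb x y).symm.le)
      a b a' b' hab hab' (fun x hx => clampF_of_lt hx) (fun x hx => clampF_of_ge hab hx)
      (fun y hy => clampF_of_lt hy) (fun y hy => clampF_of_ge hab' hy)
  -- split of the total mass
  have hsplit : m univ ≤ m (Ioo δ (1-δ)) + Tail := by
    rw [hTail, ← measure_add_measure_compl (measurableSet_Ioo : MeasurableSet (Ioo s (1-s)))]
    exact add_le_add (measure_mono (Ioo_subset_Ioo hδs.le (by linarith))) le_rfl
  -- middle part is at most the comonotone cost of the clamped marginals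
  have hmid : m (Ioo δ (1-δ)) ≤
      ∫⁻ p, ENNReal.ofReal (c p) ∂(comono (clampF F a b) (clampF G a' b')) := by
    rw [hmA measurableSet_Ioo,
      inter_eq_self_of_subset_left (Ioo_subset_Ioo hδ0.le (by linarith)),
      comono_lintegral hFb hGb hc_cont]
    have hcong2 : ∀ᵐ u ∂(volume.restrict (Ioo δ (1-δ))),
        g' u = ENNReal.ofReal (c (gInv (clampF F a b) u, gInv (clampF G a' b') u)) := by
      refine (ae_restrict_iff' measurableSet_Ioo).2 (Filter.Eventually.of_forall fun u hu => ?_)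
      have hu0 : 0 < u := lt_trans hδ0 hu.1
      have hu1 : u < 1 := lt_of_lt_of_le hu.2 (by linarith)
      have hgF : gInv (clampF F a b) u = gInv F u := by
        rw [gInv_clampF hF hab hu0 hu1]
        exact cl_of_mem ⟨gInv_mono hF hδ0 hu1 hu.1.le, gInv_mono hF hu0 h1δ1 hu.2.le⟩
      have hgG : gInv (clampF G a' b') u = gInv G u := by
        rw [gInv_clampF hG hab' hu0 hu1]
        exact cl_of_mem ⟨gInv_mono hG hδ0 hu1 hu.1.le, gInv_mono hG hu0 h1δ1 hu.2.le⟩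
      rw [hgF, hgG]
      simp [hg', gInv', hu0, hu1, mem_Ioo]
    rw [lintegral_congr_ae hcong2]
    exact lintegral_mono' (Measure.restrict_mono (Ioo_subset_Ioo (by linarith) (by linarith))
      le_rfl) le_rfl
  -- cost of the clamped coupling
  have hclampint : (∫⁻ p, ENNReal.ofReal (c p) ∂μb)
      = ∫⁻ p, ENNReal.ofReal (c (cl a b p.1, cl a' b' p.2)) ∂μ := by
    rw [hμb, lintegral_map (Measurable.ennreal_ofReal hc_cont.measurable) (cl_measurable a b a' b')]
  -- pointwise error bound
  have herr : (∫⁻ p, ENNReal.ofReal (c (cl a b p.1, cl a' b' p.2)) ∂μ)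
      ≤ (∫⁻ p, ENNReal.ofReal (c p) ∂μ)
        + ENNReal.ofReal K * μ ((Icc a b ×ˢ Icc a' b')ᶜ) := by
    have hpt : ∀ p : ℝ × ℝ, ENNReal.ofReal (c (cl a b p.1, cl a' b' p.2))
        ≤ ENNReal.ofReal (c p)
          + ((Icc a b ×ˢ Icc a' b')ᶜ).indicator (fun _ => ENNReal.ofReal K) p := by
      intro p
      refine le_trans (ENNReal.ofReal_le_ofReal (clamp_err hc_nonneg hP hab hab' p)) ?_
      refine le_trans ENNReal.ofReal_add_le ?_
      refine add_le_add le_rfl ?_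
      have hiff : (p ∈ Icc a b ×ˢ Icc a' b') ↔ ((a, a') ≤ p ∧ p ≤ (b, b')) := by
        rw [Icc_prod_Icc, mem_Icc]
      rw [Set.indicator_apply]
      by_cases hin : p ∈ Icc a b ×ˢ Icc a' b'
      · rw [if_pos hin, if_neg (Set.notMem_compl_iff.2 hin)]
        simp
      · rw [if_neg hin, if_pos (Set.mem_compl hin), hK]
    calc (∫⁻ p, ENNReal.ofReal (c (cl a b p.1, cl a' b' p.2)) ∂μ)
        ≤ ∫⁻ p, (ENNReal.ofReal (c p)
            + ((Icc a b ×ˢ Icc a' b')ᶜ).indicator (fun _ => ENNReal.ofReal K) p) ∂μ :=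
          lintegral_mono hpt
      _ = (∫⁻ p, ENNReal.ofReal (c p) ∂μ)
            + ENNReal.ofReal K * μ ((Icc a b ×ˢ Icc a' b')ᶜ) := by
          rw [lintegral_add_left (by fun_prop),
            lintegral_indicator ((measurableSet_Icc.prod measurableSet_Icc).compl),
            setLIntegral_const]
  -- bound on the measure outside the box
  have houtbd : μ ((Icc a b ×ˢ Icc a' b')ᶜ) ≤ ENNReal.ofReal (4*δ) := by
    have hsubs : ((Icc a b ×ˢ Icc a' b')ᶜ : Set (ℝ × ℝ)) ⊆
        (Prod.fst ⁻¹' Iio a) ∪ ((Prod.fst ⁻¹' Iic b)ᶜ ∪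
          ((Prod.snd ⁻¹' Iio a') ∪ (Prod.snd ⁻¹' Iic b')ᶜ)) := by
      intro p hp
      simp only [mem_compl_iff, mem_prod, mem_Icc] at hp
      simp only [mem_union, mem_preimage, mem_Iio, mem_compl_iff, mem_Iic]
      by_contra hc
      push_neg at hc
      obtain ⟨h1, h2, h3, h4⟩ := hc
      exact hp ⟨⟨h1, h2⟩, ⟨h3, h4⟩⟩
    have hIio : ∀ (H : ℝ → ℝ), IsCDF H → ∀ (ρ' : Measure ℝ), (∀ x, ρ' (Iic x) =
        ENNReal.ofReal (H x)) → ρ' (Iio (gInv H δ)) ≤ ENNReal.ofReal δ := by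
      intro H hH ρ' hρ'
      have hun : Iio (gInv H δ) = ⋃ k : ℕ, Iic (gInv H δ - 1/((k:ℝ)+1)) := by
        ext x
        simp only [mem_Iio, mem_iUnion, mem_Iic]
        constructor
        · intro hx
          obtain ⟨k, hk⟩ := exists_nat_one_div_lt (by linarith : 0 < gInv H δ - x)
          exact ⟨k, by linarith⟩
        · rintro ⟨k, hk⟩
          have : (0:ℝ) < 1/((k:ℝ)+1) := by positivity
          linarith
      rw [hun, Directed.measure_iUnion]
      · refine iSup_le fun k => ?_
        rw [hρ']
        refine ENNReal.ofReal_le_ofReal ?_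
        have : (0:ℝ) < 1/((k:ℝ)+1) := by positivity
        exact (cdf_lt_of_lt_gInv hH hδ0 hδ1 (by linarith)).le
      · refine (Monotone.directed_le fun i j hij => Iic_subset_Iic.2 ?_)
        have h1 : (0:ℝ) < (i:ℝ) + 1 := by positivity
        have h2 : (0:ℝ) < (j:ℝ) + 1 := by positivity
        have : (i:ℝ) ≤ (j:ℝ) := Nat.cast_le.2 hij
        have : 1/((j:ℝ)+1) ≤ 1/((i:ℝ)+1) := by
          rw [div_le_div_iff₀ h2 h1]; linarith
        linarith
    have hIic : ∀ (H : ℝ → ℝ), IsCDF H → ∀ (ρ' : Measure ℝ), IsProbabilityMeasure ρ' →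
        (∀ x, ρ' (Iic x) = ENNReal.ofReal (H x)) →
        ρ' ((Iic (gInv H (1-δ)))ᶜ) ≤ ENNReal.ofReal δ := by
      intro H hH ρ' hρ'P hρ'
      haveI := hρ'P
      rw [measure_compl measurableSet_Iic (measure_ne_top ρ' _), measure_univ, hρ']
      have hHb : 1 - δ ≤ H (gInv H (1-δ)) := le_cdf_gInv hH h1δ0 h1δ1
      calc 1 - ENNReal.ofReal (H (gInv H (1-δ)))
          ≤ 1 - ENNReal.ofReal (1-δ) := tsub_le_tsub_left (ENNReal.ofReal_le_ofReal hHb) 1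
        _ = ENNReal.ofReal δ := by
            rw [← ENNReal.ofReal_one, ← ENNReal.ofReal_sub _ (by linarith : (0:ℝ) ≤ 1 - δ)]
            norm_num
    have h1 : μ (Prod.fst ⁻¹' Iio a) ≤ ENNReal.ofReal δ := by
      rw [← Measure.fst_apply measurableSet_Iio]
      exact hIio F hF μ.fst hμF
    have h2 : μ ((Prod.fst ⁻¹' Iic b)ᶜ) ≤ ENNReal.ofReal δ := by
      rw [← Set.preimage_compl, ← Measure.fst_apply measurableSet_Iic.compl]
      exact hIic F hF μ.fst (by constructor; rw [Measure.fst_univ]; exact measure_univ) hμF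
    have h3 : μ (Prod.snd ⁻¹' Iio a') ≤ ENNReal.ofReal δ := by
      rw [← Measure.snd_apply measurableSet_Iio]
      exact hIio G hG μ.snd hμG
    have h4 : μ ((Prod.snd ⁻¹' Iic b')ᶜ) ≤ ENNReal.ofReal δ := by
      rw [← Set.preimage_compl, ← Measure.snd_apply measurableSet_Iic.compl]
      exact hIic G hG μ.snd (by constructor; rw [Measure.snd_univ]; exact measure_univ) hμG
    calc μ ((Icc a b ×ˢ Icc a' b')ᶜ)
        ≤ μ (Prod.fst ⁻¹' Iio a) + (μ ((Prod.fst ⁻¹' Iic b)ᶜ)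
            + (μ (Prod.snd ⁻¹' Iio a') + μ ((Prod.snd ⁻¹' Iic b')ᶜ))) :=
          le_trans (measure_mono hsubs) (le_trans (measure_union_le _ _)
            (add_le_add le_rfl (le_trans (measure_union_le _ _)
              (add_le_add le_rfl (measure_union_le _ _)))))
      _ ≤ ENNReal.ofReal δ + (ENNReal.ofReal δ + (ENNReal.ofReal δ + ENNReal.ofReal δ)) := by
          gcongr
      _ = ENNReal.ofReal (4*δ) := by
          rw [← ENNReal.ofReal_add (by positivity) (by positivity),
            ← ENNReal.ofReal_add (by positivity) (by positivity),
            ← ENNReal.ofReal_add (by positivity) (by positivity)]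
          congr 1
          ring
  -- final arithmetic
  have hfinalerr : ENNReal.ofReal K * ENNReal.ofReal (4*δ) + Tail ≤ (ε : ℝ≥0∞) := by
    rw [← ENNReal.ofReal_mul hK0, hTailT, ← ENNReal.ofReal_add (by positivity) hT0]
    have hKδ : K * (4*δ) + T ≤ εr := by
      have h1 : K * (4*δ) ≤ (4*T/s + 1) * (4*s) := by
        have h2 : 0 ≤ 4*T/s + 1 := by positivity
        nlinarith [hδs, hδ0, hKbd]
      have h2 : (4*T/s + 1) * (4*s) = 16*T + 4*s := by field_simp; ring
      have h3 : s ≤ εr/18 := hn2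
      rw [h2] at h1
      linarith [hTle]
    calc ENNReal.ofReal (K * (4*δ) + T) ≤ ENNReal.ofReal εr := ENNReal.ofReal_le_ofReal hKδ
      _ = (ε : ℝ≥0∞) := by rw [hεr]; exact ENNReal.ofReal_coe_nnreal
  -- conclusion
  calc m univ ≤ m (Ioo δ (1-δ)) + Tail := hsplit
    _ ≤ (∫⁻ p, ENNReal.ofReal (c p) ∂(comono (clampF F a b) (clampF G a' b'))) + Tail := by
        gcongr
    _ ≤ (∫⁻ p, ENNReal.ofReal (c p) ∂μb) + Tail := by gcongr
    _ = (∫⁻ p, ENNReal.ofReal (c (cl a b p.1, cl a' b' p.2)) ∂μ) + Tail := by rw [hclampint]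
    _ ≤ ((∫⁻ p, ENNReal.ofReal (c p) ∂μ)
          + ENNReal.ofReal K * μ ((Icc a b ×ˢ Icc a' b')ᶜ)) + Tail := by gcongr
    _ ≤ ((∫⁻ p, ENNReal.ofReal (c p) ∂μ) + ENNReal.ofReal K * ENNReal.ofReal (4*δ)) + Tail := by
        gcongr
    _ = (∫⁻ p, ENNReal.ofReal (c p) ∂μ)
          + (ENNReal.ofReal K * ENNReal.ofReal (4*δ) + Tail) := by ring
    _ ≤ (∫⁻ p, ENNReal.ofReal (c p) ∂μ) + (ε : ℝ≥0∞) := by gcongr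


end CSS

/-- Cambanis–Simon–Stout: the infimum over couplings of `F` and `G` of the cost `∫ c dμ`
is attained by the comonotone coupling and equals `∫₀¹ c (F⁻ u, G⁻ u) du`. -/
theorem stmt_0 (c : ℝ × ℝ → ℝ) (hc_cont : Continuous c) (hc_nonneg : ∀ p, 0 ≤ c p)
    (hP : PropP c) (F G : ℝ → ℝ) (hF : IsCDF F) (hG : IsCDF G)
    (hfin : (∫⁻ u in Ioo (0 : ℝ) 1, ENNReal.ofReal (c (gInv F u, gInv G u))) < ⊤) :
    sInf {r : ℝ≥0∞ | ∃ μ : Measure (ℝ × ℝ), IsProbabilityMeasure μ ∧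
        (∀ x : ℝ, μ.fst (Iic x) = ENNReal.ofReal (F x)) ∧
        (∀ y : ℝ, μ.snd (Iic y) = ENNReal.ofReal (G y)) ∧
        r = ∫⁻ p, ENNReal.ofReal (c p) ∂μ} =
      ∫⁻ u in Ioo (0 : ℝ) 1, ENNReal.ofReal (c (gInv F u, gInv G u)) := by
  apply le_antisymm
  · exact sInf_le ⟨CSS.comono F G, CSS.comono_isProb hF hG, CSS.comono_fst hF hG,
      CSS.comono_snd hF hG, (CSS.comono_lintegral hF hG hc_cont).symm⟩
  · refine le_sInf (fun r hr => ?_)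
    obtain ⟨μ, hμP, hμF, hμG, hrr⟩ := hr
    rw [hrr]
    exact CSS.master c hc_cont hc_nonneg hP F G hF hG hfin μ hμP hμF hμG
end

section
/- Let c : ℝ × ℝ → ℝ be a continuous nonnegative function satisfying property 𝒫 (i.e., for all x ≤ x' and y ≤ y', c(x',y') − c(x',y) − c(x,y') + c(x,y) ≤ 0). Let F and G be cumulative distribution functions on ℝ with generalized inverses F⁻ and G⁻. Then for every probability measure μ on ℝ × ℝ whose first marginal has c.d.f. F and whose second marginal has c.d.f. G, one has ∫ c dμ ≥ ∫₀¹ c(F⁻(u), G⁻(u)) du. -/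
open MeasureTheory Set ENNReal

section CDF

variable {F : ℝ → ℝ}

lemma IsCDF.nonneg (hF : IsCDF F) (x : ℝ) : 0 ≤ F x := by
  refine le_of_tendsto hF.tendsto_atBot ?_
  filter_upwards [Filter.eventually_le_atBot x] with y hy using hF.mono hy

lemma IsCDF.le_one (hF : IsCDF F) (x : ℝ) : F x ≤ 1 := by
  refine ge_of_tendsto hF.tendsto_atTop ?_
  filter_upwards [Filter.eventually_ge_atTop x] with y hy using hF.mono hy

lemma IsCDF.exists_ge (hF : IsCDF F) {u : ℝ} (hu1 : u < 1) : ∃ z, u ≤ F z := by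
  have : ∀ᶠ z in Filter.atTop, F z ∈ Ioi u :=
    hF.tendsto_atTop (Ioi_mem_nhds hu1)
  obtain ⟨z, hz⟩ := this.exists
  exact ⟨z, le_of_lt hz⟩

lemma IsCDF.bddBelow (hF : IsCDF F) {u : ℝ} (hu0 : 0 < u) : BddBelow {x : ℝ | u ≤ F x} := by
  have : ∀ᶠ z in Filter.atBot, F z ∈ Iio u :=
    hF.tendsto_atBot (Iio_mem_nhds hu0)
  obtain ⟨w, hw⟩ := Filter.eventually_atBot.1 this
  refine ⟨w, fun z hz => ?_⟩
  by_contra h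
  push_neg at h
  exact absurd hz (by simpa using not_le.2 (hw z h.le))

lemma gInv_le_iff (hF : IsCDF F) {u x : ℝ} (hu0 : 0 < u) (hu1 : u < 1) :
    gInv F u ≤ x ↔ u ≤ F x := by
  constructor
  · intro h
    have key : ∀ y, x < y → u ≤ F y := by
      intro y hy
      obtain ⟨z, hzS, hzy⟩ := exists_lt_of_csInf_lt
        (by obtain ⟨z, hz⟩ := hF.exists_ge hu1; exact ⟨z, hz⟩) (lt_of_le_of_lt h hy)
      exact le_trans hzS (hF.mono hzy.le)
    have hcont : Filter.Tendsto F (nhdsWithin x (Ioi x)) (nhds (F x)) :=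
      (hF.right_cont x).mono_left (nhdsWithin_mono x Ioi_subset_Ici_self)
    refine ge_of_tendsto hcont ?_
    filter_upwards [self_mem_nhdsWithin] with y hy using key y hy
  · intro h
    exact csInf_le (hF.bddBelow hu0) h

lemma lt_gInv_iff (hF : IsCDF F) {u x : ℝ} (hu0 : 0 < u) (hu1 : u < 1) :
    x < gInv F u ↔ F x < u := by
  rw [← not_le, ← not_le, gInv_le_iff hF hu0 hu1]

end CDF

section CK

/-- Key 1-d rearrangement inequality. -/
lemma abs4 {a b u v : ℝ} (hab : a ≤ b) (huv : u ≤ v) :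
    |b - v| + |a - u| ≤ |b - u| + |a - v| := by
  rcases abs_cases (b - v) with ⟨e1, h1⟩ | ⟨e1, h1⟩ <;>
    rcases abs_cases (a - u) with ⟨e2, h2⟩ | ⟨e2, h2⟩ <;>
    rw [e1, e2] <;>
    nlinarith [le_abs_self (b - u), neg_abs_le (b - u), le_abs_self (a - v), neg_abs_le (a - v)]

lemma abs4' {a b u v : ℝ} (hab : a ≤ b) :
    |b - max u v| + |a - min u v| ≤ |b - u| + |a - v| := by
  rcases le_total u v with h | h
  · rw [max_eq_right h, min_eq_left h]
    exact abs4 hab h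
  · rw [max_eq_left h, min_eq_right h]

noncomputable def dphi (p q : ℝ × ℝ) : ℝ :=
  |Real.arctan p.1 - Real.arctan q.1| + |Real.arctan p.2 - Real.arctan q.2|

lemma dphi_nonneg (p q : ℝ × ℝ) : 0 ≤ dphi p q :=
  add_nonneg (abs_nonneg _) (abs_nonneg _)

lemma dphi_self (p : ℝ × ℝ) : dphi p p = 0 := by simp [dphi]

lemma dphi_triangle (p q r : ℝ × ℝ) : dphi p r ≤ dphi p q + dphi q r := by
  have h1 := abs_sub_le (Real.arctan p.1) (Real.arctan q.1) (Real.arctan r.1)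
  have h2 := abs_sub_le (Real.arctan p.2) (Real.arctan q.2) (Real.arctan r.2)
  simp only [dphi]; linarith

lemma dphi_le_pi (p q : ℝ × ℝ) : dphi p q ≤ 2 * Real.pi := by
  have b1 := Real.arctan_lt_pi_div_two p.1
  have b2 := Real.neg_pi_div_two_lt_arctan p.1
  have b3 := Real.arctan_lt_pi_div_two q.1
  have b4 := Real.neg_pi_div_two_lt_arctan q.1
  have b5 := Real.arctan_lt_pi_div_two p.2
  have b6 := Real.neg_pi_div_two_lt_arctan p.2
  have b7 := Real.arctan_lt_pi_div_two q.2
  have b8 := Real.neg_pi_div_two_lt_arctan q.2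
  have h1 : |Real.arctan p.1 - Real.arctan q.1| ≤ Real.pi := by
    rw [abs_le]; constructor <;> linarith
  have h2 : |Real.arctan p.2 - Real.arctan q.2| ≤ Real.pi := by
    rw [abs_le]; constructor <;> linarith
  simp only [dphi]; linarith

variable (c : ℝ × ℝ → ℝ)

noncomputable def ckf (k : ℝ) (p : ℝ × ℝ) : ℝ := ⨅ q : ℝ × ℝ, (c q + k * dphi p q)

variable {c}

lemma ckf_bdd (hc : ∀ p, 0 ≤ c p) {k : ℝ} (hk : 0 ≤ k) (p : ℝ × ℝ) :
    BddBelow (Set.range fun q => c q + k * dphi p q) := by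
  refine ⟨0, ?_⟩
  rintro _ ⟨q, rfl⟩
  exact add_nonneg (hc q) (mul_nonneg hk (dphi_nonneg p q))

lemma ckf_nonneg (hc : ∀ p, 0 ≤ c p) {k : ℝ} (hk : 0 ≤ k) (p : ℝ × ℝ) :
    0 ≤ ckf c k p :=
  le_ciInf fun q => add_nonneg (hc q) (mul_nonneg hk (dphi_nonneg p q))

lemma ckf_le_apply (hc : ∀ p, 0 ≤ c p) {k : ℝ} (hk : 0 ≤ k) (p q : ℝ × ℝ) :
    ckf c k p ≤ c q + k * dphi p q :=
  ciInf_le (ckf_bdd hc hk p) q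

lemma ckf_le (hc : ∀ p, 0 ≤ c p) {k : ℝ} (hk : 0 ≤ k) (p : ℝ × ℝ) :
    ckf c k p ≤ c p := by
  have := ckf_le_apply hc hk p p
  rwa [dphi_self, mul_zero, add_zero] at this

lemma ckf_lip (hc : ∀ p, 0 ≤ c p) {k : ℝ} (hk : 0 ≤ k) (p p' : ℝ × ℝ) :
    ckf c k p ≤ ckf c k p' + k * dphi p p' := by
  rw [← sub_le_iff_le_add]
  refine le_ciInf fun q => ?_
  rw [sub_le_iff_le_add]
  calc ckf c k p ≤ c q + k * dphi p q := ckf_le_apply hc hk p q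
    _ ≤ c q + k * (dphi p' q + dphi p p') := by
        have := dphi_triangle p p' q
        have : dphi p q ≤ dphi p' q + dphi p p' := by
          have h := dphi_triangle p p' q
          have hsym : dphi p' q = dphi q p' := by simp [dphi, abs_sub_comm]
          linarith [dphi_triangle p p' q]
        nlinarith
    _ = c q + k * dphi p' q + k * dphi p p' := by ring

lemma ckf_abs_lip (hc : ∀ p, 0 ≤ c p) {k : ℝ} (hk : 0 ≤ k) (p p' : ℝ × ℝ) :
    |ckf c k p - ckf c k p'| ≤ k * dphi p p' := by
  rw [abs_le]
  constructor
  · have h := ckf_lip hc hk p' p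
    have hsym : dphi p' p = dphi p p' := by simp [dphi, abs_sub_comm]
    rw [hsym] at h
    linarith
  · linarith [ckf_lip hc hk p p']

lemma ckf_mono_k (hc : ∀ p, 0 ≤ c p) {k k' : ℝ} (hk : 0 ≤ k) (hkk : k ≤ k') (p : ℝ × ℝ) :
    ckf c k p ≤ ckf c k' p := by
  refine le_ciInf fun q => ?_
  calc ckf c k p ≤ c q + k * dphi p q := ckf_le_apply hc hk p q
    _ ≤ c q + k' * dphi p q := by nlinarith [dphi_nonneg p q]

end CK

section CK2

variable {c : ℝ × ℝ → ℝ}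

lemma lattice_ineq (hP : PropP c) (a b a' b' : ℝ) :
    c (max a a', max b b') + c (min a a', min b b') ≤ c (a, b) + c (a', b') := by
  rcases le_total a a' with h1 | h1 <;> rcases le_total b b' with h2 | h2
  · rw [max_eq_right h1, max_eq_right h2, min_eq_left h1, min_eq_left h2]
    try linarith
  · rw [max_eq_right h1, max_eq_left h2, min_eq_left h1, min_eq_right h2]
    have := hP h1 h2
    linarith
  · rw [max_eq_left h1, max_eq_right h2, min_eq_right h1, min_eq_left h2]
    have := hP h1 h2
    linarith
  · rw [max_eq_left h1, max_eq_left h2, min_eq_right h1, min_eq_right h2]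
    try linarith

lemma ckf_propP (hc : ∀ p, 0 ≤ c p) (hP : PropP c) {k : ℝ} (hk : 0 ≤ k) :
    PropP (ckf c k) := by
  intro x x' y y' hx hy
  have key : ∀ q q' : ℝ × ℝ, ckf c k (x', y') + ckf c k (x, y) ≤
      (c q + k * dphi (x', y) q) + (c q' + k * dphi (x, y') q') := by
    intro q q'
    have h1 : ckf c k (x', y') ≤ c (max q.1 q'.1, max q.2 q'.2)
        + k * dphi (x', y') (max q.1 q'.1, max q.2 q'.2) := ckf_le_apply hc hk _ _
    have h2 : ckf c k (x, y) ≤ c (min q.1 q'.1, min q.2 q'.2)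
        + k * dphi (x, y) (min q.1 q'.1, min q.2 q'.2) := ckf_le_apply hc hk _ _
    have h3 : c (max q.1 q'.1, max q.2 q'.2) + c (min q.1 q'.1, min q.2 q'.2)
        ≤ c q + c q' := by
      have := lattice_ineq hP q.1 q.2 q'.1 q'.2
      simpa using this
    have h4 : dphi (x', y') (max q.1 q'.1, max q.2 q'.2)
        + dphi (x, y) (min q.1 q'.1, min q.2 q'.2)
        ≤ dphi (x', y) q + dphi (x, y') q' := by
      have hmax1 : Real.arctan (max q.1 q'.1) = max (Real.arctan q.1) (Real.arctan q'.1) :=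
        Real.arctan_strictMono.monotone.map_max
      have hmin1 : Real.arctan (min q.1 q'.1) = min (Real.arctan q.1) (Real.arctan q'.1) :=
        Real.arctan_strictMono.monotone.map_min
      have hmax2 : Real.arctan (max q.2 q'.2) = max (Real.arctan q.2) (Real.arctan q'.2) :=
        Real.arctan_strictMono.monotone.map_max
      have hmin2 : Real.arctan (min q.2 q'.2) = min (Real.arctan q.2) (Real.arctan q'.2) :=
        Real.arctan_strictMono.monotone.map_min
      have hax : Real.arctan x ≤ Real.arctan x' := Real.arctan_strictMono.monotone hx
      have hay : Real.arctan y ≤ Real.arctan y' := Real.arctan_strictMono.monotone hy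
      have e1 : |Real.arctan x' - Real.arctan (max q.1 q'.1)|
          + |Real.arctan x - Real.arctan (min q.1 q'.1)|
          ≤ |Real.arctan x' - Real.arctan q.1| + |Real.arctan x - Real.arctan q'.1| := by
        rw [hmax1, hmin1]; exact abs4' hax
      have e2 : |Real.arctan y' - Real.arctan (max q.2 q'.2)|
          + |Real.arctan y - Real.arctan (min q.2 q'.2)|
          ≤ |Real.arctan y - Real.arctan q.2| + |Real.arctan y' - Real.arctan q'.2| := by
        rw [hmax2, hmin2]
        have h := abs4' (u := Real.arctan q'.2) (v := Real.arctan q.2) hay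
        rw [max_comm, min_comm] at h
        linarith
      simp only [dphi]
      linarith
    have h5 : k * (dphi (x', y') (max q.1 q'.1, max q.2 q'.2)
        + dphi (x, y) (min q.1 q'.1, min q.2 q'.2))
        ≤ k * (dphi (x', y) q + dphi (x, y') q') := mul_le_mul_of_nonneg_left h4 hk
    nlinarith
  have step1 : ckf c k (x', y') + ckf c k (x, y) - ckf c k (x, y') ≤ ckf c k (x', y) := by
    refine le_ciInf fun q => ?_
    rw [sub_le_iff_le_add]
    have : ckf c k (x', y') + ckf c k (x, y) - (c q + k * dphi (x', y) q) ≤ ckf c k (x, y') := by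
      refine le_ciInf fun q' => ?_
      linarith [key q q']
    linarith
  linarith

lemma ckf_continuous (hc : ∀ p, 0 ≤ c p) {k : ℝ} (hk : 0 ≤ k) :
    Continuous (ckf c k) := by
  rw [continuous_iff_continuousAt]
  intro p₀
  have hdc : Continuous (fun p : ℝ × ℝ => k * dphi p p₀) := by
    refine continuous_const.mul ?_
    exact ((Real.continuous_arctan.comp continuous_fst).sub continuous_const).abs.add
      ((Real.continuous_arctan.comp continuous_snd).sub continuous_const).abs
  have hd0 : Filter.Tendsto (fun p => k * dphi p p₀) (nhds p₀) (nhds 0) := by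
    simpa [dphi_self] using hdc.tendsto p₀
  rw [ContinuousAt, tendsto_iff_dist_tendsto_zero]
  refine squeeze_zero (fun p => dist_nonneg) (fun p => ?_) hd0
  rw [Real.dist_eq]
  exact ckf_abs_lip hc hk p p₀

lemma ckf_tendsto (hc_cont : Continuous c) (hc : ∀ p, 0 ≤ c p) (p : ℝ × ℝ) :
    Filter.Tendsto (fun k : ℕ => ckf c k p) Filter.atTop (nhds (c p)) := by
  rw [Metric.tendsto_atTop]
  intro ε hε
  have h1 : ContinuousAt Real.tan (Real.arctan p.1) := by
    rw [Real.continuousAt_tan]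
    exact (Real.cos_arctan_pos p.1).ne'
  have h2 : ContinuousAt Real.tan (Real.arctan p.2) := by
    rw [Real.continuousAt_tan]
    exact (Real.cos_arctan_pos p.2).ne'
  have hT : ContinuousAt (fun w : ℝ × ℝ => (Real.tan w.1, Real.tan w.2))
      (Real.arctan p.1, Real.arctan p.2) :=
    ContinuousAt.prodMk (ContinuousAt.comp (x := (Real.arctan p.1, Real.arctan p.2)) (f := Prod.fst) h1 continuousAt_fst)
      (ContinuousAt.comp (x := (Real.arctan p.1, Real.arctan p.2)) (f := Prod.snd) h2 continuousAt_snd)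
  have htan : ContinuousAt (fun w : ℝ × ℝ => c (Real.tan w.1, Real.tan w.2))
      (Real.arctan p.1, Real.arctan p.2) := hc_cont.continuousAt.comp hT
  rw [Metric.continuousAt_iff] at htan
  obtain ⟨δ, hδ, hball⟩ := htan (ε / 2) (by linarith)
  obtain ⟨K, hK⟩ := exists_nat_ge ((c p) / δ)
  refine ⟨K, fun k hk => ?_⟩
  have hkey : c p - ε / 2 ≤ ckf c (k : ℝ) p := by
    refine le_ciInf fun q => ?_
    rcases lt_or_ge (dphi p q) δ with hlt | hge
    · have hdist : dist (Real.arctan q.1, Real.arctan q.2)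
          (Real.arctan p.1, Real.arctan p.2) < δ := by
        rw [Prod.dist_eq]
        simp only [Real.dist_eq]
        refine max_lt ?_ ?_
        · refine lt_of_le_of_lt ?_ hlt
          rw [abs_sub_comm]
          exact le_add_of_nonneg_right (abs_nonneg _)
        · refine lt_of_le_of_lt ?_ hlt
          rw [abs_sub_comm]
          exact le_add_of_nonneg_left (abs_nonneg _)
      have h6 := hball hdist
      simp only [Real.tan_arctan, Prod.mk.eta] at h6
      rw [Real.dist_eq] at h6
      have hq : c p - ε / 2 < c q := by
        have := abs_lt.1 h6
        linarith [this.1]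
      have hnn : (0:ℝ) ≤ (k:ℝ) * dphi p q :=
        mul_nonneg (by positivity) (dphi_nonneg p q)
      linarith
    · have hKk : ((K:ℕ):ℝ) ≤ (k:ℝ) := by exact_mod_cast hk
      have hcpK : c p ≤ (K:ℝ) * δ := by
        rw [div_le_iff₀ hδ] at hK
        linarith
      have h0K : (0:ℝ) ≤ (K:ℝ) := by positivity
      have : c p ≤ (k:ℝ) * dphi p q := by nlinarith
      linarith [hc q]
  have hle : ckf c (k:ℝ) p ≤ c p := ckf_le hc (by positivity) p
  rw [Real.dist_eq, abs_lt]
  constructor <;> linarith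

end CK2

section Grid

open Finset

noncomputable def grid (m i : ℕ) : ℝ :=
  Real.tan (-(Real.pi/2) + (i+1) * (Real.pi/(m+2)))

lemma theta_bounds {m i : ℕ} (hi : i ≤ m) :
    -(Real.pi/2) < -(Real.pi/2) + (i+1) * (Real.pi/(m+2)) ∧
      -(Real.pi/2) + (i+1) * (Real.pi/(m+2)) < Real.pi/2 := by
  have hpi := Real.pi_pos
  have hm2 : (0:ℝ) < (m:ℝ) + 2 := by positivity
  have hh : (0:ℝ) < Real.pi/((m:ℝ)+2) := by positivity
  constructor
  · nlinarith [hh, (by positivity : (0:ℝ) < ((i:ℝ)+1))]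
  · have hi1 : ((i:ℝ)+1) ≤ (m:ℝ)+1 := by
      have : (i:ℝ) ≤ (m:ℝ) := by exact_mod_cast hi
      linarith
    have : ((i:ℝ)+1) * (Real.pi/((m:ℝ)+2)) < ((m:ℝ)+2) * (Real.pi/((m:ℝ)+2)) := by
      apply mul_lt_mul_of_pos_right _ hh
      linarith
    have heq : ((m:ℝ)+2) * (Real.pi/((m:ℝ)+2)) = Real.pi := by
      field_simp
    push_cast
    nlinarith

lemma arctan_grid {m i : ℕ} (hi : i ≤ m) :
    Real.arctan (grid m i) = -(Real.pi/2) + (i+1) * (Real.pi/(m+2)) := by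
  obtain ⟨h1, h2⟩ := theta_bounds hi
  exact Real.arctan_tan h1 h2

lemma grid_mono {m i j : ℕ} (hij : i ≤ j) (hj : j ≤ m) : grid m i ≤ grid m j := by
  have hi : i ≤ m := le_trans hij hj
  have := Real.arctan_strictMono.le_iff_le (a := grid m i) (b := grid m j)
  rw [← this, arctan_grid hi, arctan_grid hj]
  have hh : (0:ℝ) ≤ Real.pi/((m:ℝ)+2) := by positivity
  have : ((i:ℝ)+1) ≤ ((j:ℝ)+1) := by
    have : (i:ℝ) ≤ (j:ℝ) := by exact_mod_cast hij
    linarith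
  push_cast
  nlinarith

noncomputable def idxQ (m : ℕ) (x : ℝ) : ℕ :=
  ((Finset.Icc 1 m).filter (fun i => grid m i < x)).card

lemma idxQ_le (m : ℕ) (x : ℝ) : idxQ m x ≤ m := by
  unfold idxQ
  calc ((Finset.Icc 1 m).filter (fun i => grid m i < x)).card
      ≤ (Finset.Icc 1 m).card := Finset.card_filter_le _ _
    _ = m := by rw [Nat.card_Icc]; omega

lemma idxQ_spec {m i : ℕ} {x : ℝ} (h1 : 1 ≤ i) (h2 : i ≤ m) :
    grid m i < x ↔ i ≤ idxQ m x := by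
  constructor
  · intro hgx
    have hsub : Finset.Icc 1 i ⊆ (Finset.Icc 1 m).filter (fun j => grid m j < x) := by
      intro j hj
      rw [Finset.mem_Icc] at hj
      rw [Finset.mem_filter, Finset.mem_Icc]
      exact ⟨⟨hj.1, le_trans hj.2 h2⟩, lt_of_le_of_lt (grid_mono hj.2 h2) hgx⟩
    have := Finset.card_le_card hsub
    rw [Nat.card_Icc] at this
    unfold idxQ
    omega
  · intro hi
    by_contra hgx
    push_neg at hgx
    have hsub : (Finset.Icc 1 m).filter (fun j => grid m j < x) ⊆ Finset.Ico 1 i := by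
      intro j hj
      rw [Finset.mem_filter, Finset.mem_Icc] at hj
      rw [Finset.mem_Ico]
      refine ⟨hj.1.1, ?_⟩
      by_contra hji
      push_neg at hji
      exact absurd hj.2 (not_lt.2 (le_trans hgx (grid_mono hji hj.1.2)))
    have := Finset.card_le_card hsub
    rw [Nat.card_Ico] at this
    unfold idxQ at hi
    omega

noncomputable def rr (m : ℕ) (x : ℝ) : ℝ := grid m (idxQ m x)

lemma rr_err (m : ℕ) (x : ℝ) :
    |Real.arctan (rr m x) - Real.arctan x| ≤ Real.pi/(m+2) := by
  set I := idxQ m x with hIdef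
  have hIm : I ≤ m := idxQ_le m x
  have harr : Real.arctan (rr m x) = -(Real.pi/2) + (I+1) * (Real.pi/(m+2)) := arctan_grid hIm
  have hh : (0:ℝ) < Real.pi/((m:ℝ)+2) := by positivity
  have hxlt := Real.arctan_lt_pi_div_two x
  have hxgt := Real.neg_pi_div_two_lt_arctan x
  -- upper bound on arctan x - arctan rr
  have hup : Real.arctan x - Real.arctan (rr m x) ≤ Real.pi/(m+2) := by
    rcases Nat.lt_or_ge I m with hIlt | hIge
    · have hnot : ¬ grid m (I+1) < x := by
        rw [idxQ_spec (by omega) (by omega)]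
        omega
      push_neg at hnot
      have : Real.arctan x ≤ Real.arctan (grid m (I+1)) :=
        Real.arctan_strictMono.monotone hnot
      rw [arctan_grid (by omega : I+1 ≤ m)] at this
      rw [harr]
      push_cast at this ⊢
      nlinarith
    · have hIm' : I = m := le_antisymm hIm hIge
      rw [harr, hIm']
      have heq : ((m:ℝ)+2) * (Real.pi/((m:ℝ)+2)) = Real.pi := by field_simp
      push_cast
      nlinarith
  have hdown : Real.arctan (rr m x) - Real.arctan x ≤ Real.pi/(m+2) := by
    rcases Nat.eq_zero_or_pos I with hI0 | hIpos
    · rw [harr, hI0]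
      push_cast
      nlinarith
    · have : grid m I < x := by
        rw [idxQ_spec hIpos hIm]
      have : Real.arctan (rr m x) < Real.arctan x := Real.arctan_strictMono this
      linarith
  rw [abs_le]
  constructor <;> linarith

lemma tele (m n : ℕ) (hn : n ≤ m) (d : ℕ → ℝ) :
    (∑ i ∈ Finset.range m, if i < n then d (i+1) - d i else 0) = d n - d 0 := by
  rw [← Finset.sum_filter]
  have h : (Finset.range m).filter (fun i => i < n) = Finset.range n := by
    ext i
    simp only [Finset.mem_filter, Finset.mem_range]
    omega
  rw [h, Finset.sum_range_sub]

lemma sum_id (g : ℕ → ℕ → ℝ) {I J m : ℕ} (hI : I ≤ m) (hJ : J ≤ m) :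
    g I J = g 0 0 + (∑ i ∈ Finset.range m, if i < I then g (i+1) 0 - g i 0 else 0)
      + (∑ j ∈ Finset.range m, if j < J then g 0 (j+1) - g 0 j else 0)
      + ∑ i ∈ Finset.range m, ∑ j ∈ Finset.range m,
          if i < I ∧ j < J then g (i+1) (j+1) - g (i+1) j - (g i (j+1) - g i j) else 0 := by
  have h1 := tele m I hI (fun i => g i 0)
  have h2 := tele m J hJ (fun j => g 0 j)
  have h3 : (∑ i ∈ Finset.range m, ∑ j ∈ Finset.range m,
      if i < I ∧ j < J then g (i+1) (j+1) - g (i+1) j - (g i (j+1) - g i j) else 0)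
      = (g I J - g I 0) - (g 0 J - g 0 0) := by
    have hrows : (∑ i ∈ Finset.range m, ∑ j ∈ Finset.range m,
        if i < I ∧ j < J then g (i+1) (j+1) - g (i+1) j - (g i (j+1) - g i j) else 0)
        = ∑ i ∈ Finset.range m,
            (if i < I then (fun i' => g i' J - g i' 0) (i+1) - (fun i' => g i' J - g i' 0) i
             else 0) := by
      refine Finset.sum_congr rfl fun i _ => ?_
      by_cases hi : i < I
      · simp only [hi, true_and, if_true]
        have ht := tele m J hJ (fun j => g (i+1) j - g i j)
        have hcg : (∑ j ∈ Finset.range m,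
            if j < J then g (i+1) (j+1) - g (i+1) j - (g i (j+1) - g i j) else 0)
            = (∑ j ∈ Finset.range m,
              if j < J then (fun j' => g (i+1) j' - g i j') (j+1)
                - (fun j' => g (i+1) j' - g i j') j else 0) := by
          refine Finset.sum_congr rfl fun j _ => ?_
          by_cases hj : j < J
          · rw [if_pos hj, if_pos hj]; ring
          · rw [if_neg hj, if_neg hj]
        rw [hcg, ht]
        ring
      · simp only [hi, false_and, if_false, if_neg hi]
        exact (Finset.sum_eq_zero fun j _ => rfl)
    rw [hrows, tele m I hI (fun i' => g i' J - g i' 0)]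
  rw [h1, h2, h3]
  ring

end Grid

section GS

variable {α : Type*} [MeasurableSpace α]

noncomputable def GS (m : ℕ) (A : ℝ) (a b : ℕ → ℝ) (d : ℕ → ℕ → ℝ)
    (U V : ℕ → Set α) (p : α) : ℝ :=
  A + (∑ i ∈ Finset.range m, (U i).indicator (fun _ => a i) p)
    + (∑ j ∈ Finset.range m, (V j).indicator (fun _ => b j) p)
    + ∑ i ∈ Finset.range m, ∑ j ∈ Finset.range m,
        ((U i) ∩ (V j)).indicator (fun _ => d i j) p

lemma indicator_ite (s : Set α) (r : ℝ) (p : α) (P : Prop) [Decidable P]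
    (h : p ∈ s ↔ P) : s.indicator (fun _ => r) p = if P then r else 0 := by
  classical
  rw [Set.indicator_apply]
  exact if_congr h rfl rfl

variable (ν : Measure α) [IsProbabilityMeasure ν]

lemma integrable_GS (m : ℕ) (A : ℝ) (a b : ℕ → ℝ) (d : ℕ → ℕ → ℝ)
    (U V : ℕ → Set α) (hU : ∀ i, MeasurableSet (U i)) (hV : ∀ j, MeasurableSet (V j)) :
    Integrable (GS m A a b d U V) ν := by
  unfold GS
  refine Integrable.add (Integrable.add (Integrable.add (integrable_const A) ?_) ?_) ?_
  · exact integrable_finset_sum _ (fun i _ => (integrable_const (a i)).indicator (hU i))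
  · exact integrable_finset_sum _ (fun j _ => (integrable_const (b j)).indicator (hV j))
  · refine integrable_finset_sum _ (fun i _ => ?_)
    exact integrable_finset_sum _ (fun j _ => (integrable_const (d i j)).indicator ((hU i).inter (hV j)))

lemma integral_GS (m : ℕ) (A : ℝ) (a b : ℕ → ℝ) (d : ℕ → ℕ → ℝ)
    (U V : ℕ → Set α) (hU : ∀ i, MeasurableSet (U i)) (hV : ∀ j, MeasurableSet (V j)) :
    ∫ p, GS m A a b d U V p ∂ν
      = A + (∑ i ∈ Finset.range m, a i * (ν (U i)).toReal)
        + (∑ j ∈ Finset.range m, b j * (ν (V j)).toReal)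
        + ∑ i ∈ Finset.range m, ∑ j ∈ Finset.range m, d i j * (ν (U i ∩ V j)).toReal := by
  have hint : ∀ (s : Set α), MeasurableSet s → ∀ r : ℝ,
      (∫ p, s.indicator (fun _ => r) p ∂ν) = r * (ν s).toReal := by
    intro s hs r
    rw [integral_indicator_const r hs, smul_eq_mul, mul_comm, measureReal_def]
  have h1 : Integrable (fun p => ∑ i ∈ Finset.range m, (U i).indicator (fun _ => a i) p) ν :=
    integrable_finset_sum _ (fun i _ => (integrable_const (a i)).indicator (hU i))
  have h2 : Integrable (fun p => ∑ j ∈ Finset.range m, (V j).indicator (fun _ => b j) p) ν :=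
    integrable_finset_sum _ (fun j _ => (integrable_const (b j)).indicator (hV j))
  have h3 : Integrable (fun p => ∑ i ∈ Finset.range m, ∑ j ∈ Finset.range m,
      ((U i) ∩ (V j)).indicator (fun _ => d i j) p) ν := by
    refine integrable_finset_sum _ (fun i _ => ?_)
    exact integrable_finset_sum _ (fun j _ => (integrable_const (d i j)).indicator ((hU i).inter (hV j)))
  have h12 : Integrable (fun p => A + ∑ i ∈ Finset.range m, (U i).indicator (fun _ => a i) p) ν :=
    (integrable_const A).add h1
  have h123 : Integrable (fun p => (A + ∑ i ∈ Finset.range m, (U i).indicator (fun _ => a i) p)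
      + ∑ j ∈ Finset.range m, (V j).indicator (fun _ => b j) p) ν := h12.add h2
  unfold GS
  rw [integral_add h123 h3, integral_add h12 h2, integral_add (integrable_const A) h1,
    integral_const]
  have e1 : ∫ p, (∑ i ∈ Finset.range m, (U i).indicator (fun _ => a i) p) ∂ν
      = ∑ i ∈ Finset.range m, a i * (ν (U i)).toReal := by
    rw [integral_finset_sum _ (fun i _ => (integrable_const (a i)).indicator (hU i))]
    exact Finset.sum_congr rfl (fun i _ => hint _ (hU i) _)
  have e2 : ∫ p, (∑ j ∈ Finset.range m, (V j).indicator (fun _ => b j) p) ∂ν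
      = ∑ j ∈ Finset.range m, b j * (ν (V j)).toReal := by
    rw [integral_finset_sum _ (fun j _ => (integrable_const (b j)).indicator (hV j))]
    exact Finset.sum_congr rfl (fun j _ => hint _ (hV j) _)
  have e3 : ∫ p, (∑ i ∈ Finset.range m, ∑ j ∈ Finset.range m,
      ((U i) ∩ (V j)).indicator (fun _ => d i j) p) ∂ν
      = ∑ i ∈ Finset.range m, ∑ j ∈ Finset.range m, d i j * (ν (U i ∩ V j)).toReal := by
    rw [integral_finset_sum _ (fun i _ => integrable_finset_sum _
      (fun j _ => (integrable_const (d i j)).indicator ((hU i).inter (hV j))))]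
    refine Finset.sum_congr rfl (fun i _ => ?_)
    rw [integral_finset_sum _ (fun j _ => (integrable_const (d i j)).indicator ((hU i).inter (hV j)))]
    exact Finset.sum_congr rfl (fun j _ => hint _ ((hU i).inter (hV j)) _)
  rw [e1, e2, e3]
  simp [measure_univ]

end GS

section MeasVals

lemma prob_restrict : IsProbabilityMeasure (volume.restrict (Ioo (0:ℝ) 1)) := by
  constructor
  rw [Measure.restrict_apply_univ]
  simp [Real.volume_Ioo]

variable {F G : ℝ → ℝ}

lemma gInv_monotoneOn (hF : IsCDF F) : MonotoneOn (gInv F) (Ioo (0:ℝ) 1) := by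
  intro u hu u' hu' huu
  have h1 : gInv F u' ≤ gInv F u' := le_refl _
  rw [gInv_le_iff hF hu'.1 hu'.2] at h1
  rw [gInv_le_iff hF hu.1 hu.2]
  exact le_trans huu h1

lemma toReal_one_sub {r : ℝ} (h0 : 0 ≤ r) (h1 : r ≤ 1) :
    ((1 : ℝ≥0∞) - ENNReal.ofReal r).toReal = 1 - r := by
  rw [ENNReal.toReal_sub_of_le (ENNReal.ofReal_le_one.2 h1) ENNReal.one_ne_top,
    ENNReal.toReal_ofReal h0, ENNReal.toReal_one]

lemma mu_margin1 (μ : Measure (ℝ × ℝ)) [IsProbabilityMeasure μ]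
    (hμF : ∀ x : ℝ, μ.fst (Iic x) = ENNReal.ofReal (F x)) (a : ℝ) :
    μ {p : ℝ × ℝ | a < p.1} = 1 - ENNReal.ofReal (F a) := by
  have h1 : {p : ℝ × ℝ | a < p.1} = Prod.fst ⁻¹' (Ioi a) := rfl
  rw [h1, ← Measure.fst_apply measurableSet_Ioi, ← Set.compl_Iic,
    measure_compl measurableSet_Iic (measure_ne_top _ _), measure_univ, hμF]

lemma mu_margin2 (μ : Measure (ℝ × ℝ)) [IsProbabilityMeasure μ]
    (hμG : ∀ y : ℝ, μ.snd (Iic y) = ENNReal.ofReal (G y)) (b : ℝ) :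
    μ {p : ℝ × ℝ | b < p.2} = 1 - ENNReal.ofReal (G b) := by
  have h1 : {p : ℝ × ℝ | b < p.2} = Prod.snd ⁻¹' (Ioi b) := rfl
  rw [h1, ← Measure.snd_apply measurableSet_Ioi, ← Set.compl_Iic,
    measure_compl measurableSet_Iic (measure_ne_top _ _), measure_univ, hμG]

lemma curve_margin {a : ℝ} (h0 : 0 ≤ a) :
    (volume.restrict (Ioo (0:ℝ) 1)) {u : ℝ | a < u} = ENNReal.ofReal (1 - a) := by
  have h1 : {u : ℝ | a < u} = Ioi a := rfl
  rw [h1, Measure.restrict_apply measurableSet_Ioi]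
  have h2 : Ioi a ∩ Ioo 0 1 = Ioo a 1 := by
    ext u
    simp only [mem_inter_iff, mem_Ioi, mem_Ioo]
    constructor
    · rintro ⟨hh1, _, hh3⟩; exact ⟨hh1, hh3⟩
    · rintro ⟨hh1, hh2⟩; exact ⟨hh1, lt_of_le_of_lt h0 hh1, hh2⟩
  rw [h2, Real.volume_Ioo]

lemma curve_joint {a b : ℝ} (h0 : 0 ≤ a) (h0' : 0 ≤ b) :
    (volume.restrict (Ioo (0:ℝ) 1)) ({u : ℝ | a < u} ∩ {u : ℝ | b < u})
      = ENNReal.ofReal (1 - max a b) := by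
  have h1 : {u : ℝ | a < u} ∩ {u : ℝ | b < u} = {u : ℝ | max a b < u} := by
    ext u
    simp [max_lt_iff]
  rw [h1]
  exact curve_margin (le_trans h0 (le_max_left a b))

lemma mu_joint_le (μ : Measure (ℝ × ℝ)) [IsProbabilityMeasure μ]
    (hμF : ∀ x : ℝ, μ.fst (Iic x) = ENNReal.ofReal (F x))
    (hμG : ∀ y : ℝ, μ.snd (Iic y) = ENNReal.ofReal (G y))
    (hF : IsCDF F) (hG : IsCDF G) (a b : ℝ) :
    (μ ({p : ℝ × ℝ | a < p.1} ∩ {p : ℝ × ℝ | b < p.2})).toReal ≤ 1 - max (F a) (G b) := by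
  have hle1 : (μ ({p : ℝ × ℝ | a < p.1} ∩ {p : ℝ × ℝ | b < p.2})).toReal ≤ 1 - F a := by
    have h := measure_mono (μ := μ)
      (inter_subset_left (s := {p : ℝ × ℝ | a < p.1}) (t := {p : ℝ × ℝ | b < p.2}))
    rw [mu_margin1 μ hμF a] at h
    have := ENNReal.toReal_mono (by
      rw [← mu_margin1 μ hμF a] at *
      exact (measure_ne_top _ _)) h
    rwa [toReal_one_sub (hF.nonneg a) (hF.le_one a)] at this
  have hle2 : (μ ({p : ℝ × ℝ | a < p.1} ∩ {p : ℝ × ℝ | b < p.2})).toReal ≤ 1 - G b := by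
    have h := measure_mono (μ := μ)
      (inter_subset_right (s := {p : ℝ × ℝ | a < p.1}) (t := {p : ℝ × ℝ | b < p.2}))
    rw [mu_margin2 μ hμG b] at h
    have := ENNReal.toReal_mono (by
      rw [← mu_margin2 μ hμG b] at *
      exact (measure_ne_top _ _)) h
    rwa [toReal_one_sub (hG.nonneg b) (hG.le_one b)] at this
  rcases max_cases (F a) (G b) with ⟨hm, _⟩ | ⟨hm, _⟩ <;> rw [hm]
  · exact hle1
  · exact hle2

end MeasVals

section Pointwise

variable {c : ℝ × ℝ → ℝ}

lemma pointwise_id (c : ℝ × ℝ → ℝ) (k : ℝ) (m : ℕ) (x y : ℝ) :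
    ckf c k (rr m x, rr m y)
      = ckf c k (grid m 0, grid m 0)
        + (∑ i ∈ Finset.range m, if grid m (i+1) < x
            then ckf c k (grid m (i+1), grid m 0) - ckf c k (grid m i, grid m 0) else 0)
        + (∑ j ∈ Finset.range m, if grid m (j+1) < y
            then ckf c k (grid m 0, grid m (j+1)) - ckf c k (grid m 0, grid m j) else 0)
        + ∑ i ∈ Finset.range m, ∑ j ∈ Finset.range m,
            if grid m (i+1) < x ∧ grid m (j+1) < y
            then ckf c k (grid m (i+1), grid m (j+1)) - ckf c k (grid m (i+1), grid m j)
              - (ckf c k (grid m i, grid m (j+1)) - ckf c k (grid m i, grid m j)) else 0 := by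
  have hI := idxQ_le m x
  have hJ := idxQ_le m y
  have hid := sum_id (fun i j => ckf c k (grid m i, grid m j)) hI hJ
  have hcx : ∀ i, i ∈ Finset.range m → (grid m (i+1) < x ↔ i < idxQ m x) := by
    intro i hi
    rw [Finset.mem_range] at hi
    rw [idxQ_spec (by omega) (by omega)]
    omega
  have hcy : ∀ j, j ∈ Finset.range m → (grid m (j+1) < y ↔ j < idxQ m y) := by
    intro j hj
    rw [Finset.mem_range] at hj
    rw [idxQ_spec (by omega) (by omega)]
    omega
  refine Eq.trans (show ckf c k (rr m x, rr m y) = _ from hid) ?_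
  congr 1
  · congr 1
    · congr 1
      exact Finset.sum_congr rfl fun i hi => if_congr (hcx i hi).symm rfl rfl
    · exact Finset.sum_congr rfl fun j hj => if_congr (hcy j hj).symm rfl rfl
  · refine Finset.sum_congr rfl fun i hi => Finset.sum_congr rfl fun j hj => ?_
    exact if_congr (and_congr (hcx i hi).symm (hcy j hj).symm) rfl rfl

lemma GS_eq_point {α : Type*} [MeasurableSpace α] (c : ℝ × ℝ → ℝ) (k : ℝ) (m : ℕ)
    (x y : ℝ) (U V : ℕ → Set α) (p : α)
    (hU : ∀ i, i < m → (p ∈ U i ↔ grid m (i+1) < x))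
    (hV : ∀ j, j < m → (p ∈ V j ↔ grid m (j+1) < y)) :
    GS m (ckf c k (grid m 0, grid m 0))
      (fun i => ckf c k (grid m (i+1), grid m 0) - ckf c k (grid m i, grid m 0))
      (fun j => ckf c k (grid m 0, grid m (j+1)) - ckf c k (grid m 0, grid m j))
      (fun i j => ckf c k (grid m (i+1), grid m (j+1)) - ckf c k (grid m (i+1), grid m j)
        - (ckf c k (grid m i, grid m (j+1)) - ckf c k (grid m i, grid m j)))
      U V p = ckf c k (rr m x, rr m y) := by
  rw [pointwise_id c k m x y]
  unfold GS
  congr 1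
  · congr 1
    · congr 1
      refine Finset.sum_congr rfl fun i hi => ?_
      rw [Finset.mem_range] at hi
      exact indicator_ite _ _ _ _ (hU i hi)
    · refine Finset.sum_congr rfl fun j hj => ?_
      rw [Finset.mem_range] at hj
      exact indicator_ite _ _ _ _ (hV j hj)
  · refine Finset.sum_congr rfl fun i hi => Finset.sum_congr rfl fun j hj => ?_
    rw [Finset.mem_range] at hi hj
    refine indicator_ite _ _ _ _ ?_
    rw [Set.mem_inter_iff]
    exact and_congr (hU i hi) (hV j hj)

lemma ckf_bound (hc : ∀ p, 0 ≤ c p) {k : ℝ} (hk : 0 ≤ k) (p : ℝ × ℝ) :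
    |ckf c k p| ≤ c (0, 0) + k * (2 * Real.pi) := by
  rw [abs_of_nonneg (ckf_nonneg hc hk p)]
  calc ckf c k p ≤ c (0, 0) + k * dphi p (0, 0) := ckf_le_apply hc hk p (0, 0)
    _ ≤ c (0, 0) + k * (2 * Real.pi) := by
        have := dphi_le_pi p (0, 0)
        nlinarith

lemma ckf_rr_err (hc : ∀ p, 0 ≤ c p) {k : ℝ} (hk : 0 ≤ k) (m : ℕ) (x y : ℝ) :
    |ckf c k (rr m x, rr m y) - ckf c k (x, y)| ≤ 2 * (k * (Real.pi / (m + 2))) := by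
  have h := ckf_abs_lip hc hk (rr m x, rr m y) (x, y)
  have hd : dphi (rr m x, rr m y) (x, y) ≤ 2 * (Real.pi / (m + 2)) := by
    have h1 := rr_err m x
    have h2 := rr_err m y
    simp only [dphi]
    push_cast at h1 h2 ⊢
    linarith
  nlinarith [dphi_nonneg (rr m x, rr m y) (x, y)]

end Pointwise

section Main

variable {c : ℝ × ℝ → ℝ} {F G : ℝ → ℝ}

lemma key_k (hc : ∀ p, 0 ≤ c p) (hP : PropP c)
    (hF : IsCDF F) (hG : IsCDF G)
    (μ : Measure (ℝ × ℝ)) [IsProbabilityMeasure μ]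
    (hμF : ∀ x : ℝ, μ.fst (Iic x) = ENNReal.ofReal (F x))
    (hμG : ∀ y : ℝ, μ.snd (Iic y) = ENNReal.ofReal (G y))
    {k : ℝ} (hk : 0 ≤ k)
    (hccont : Continuous (ckf c k)) :
    ∫ u in Ioo (0:ℝ) 1, ckf c k (gInv F u, gInv G u) ≤ ∫ p, ckf c k p ∂μ := by
  haveI : IsProbabilityMeasure (volume.restrict (Ioo (0:ℝ) 1)) := prob_restrict
  have hmeas : AEMeasurable (fun u => (gInv F u, gInv G u)) (volume.restrict (Ioo (0:ℝ) 1)) :=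
    (aemeasurable_restrict_of_monotoneOn measurableSet_Ioo (gInv_monotoneOn hF)).prodMk
      (aemeasurable_restrict_of_monotoneOn measurableSet_Ioo (gInv_monotoneOn hG))
  have hint_curve : Integrable (fun u => ckf c k (gInv F u, gInv G u))
      (volume.restrict (Ioo (0:ℝ) 1)) := by
    refine Integrable.mono' (integrable_const (c (0,0) + k * (2*Real.pi)))
      (hccont.measurable.comp_aemeasurable hmeas).aestronglyMeasurable ?_
    exact Filter.Eventually.of_forall fun u => by
      rw [Real.norm_eq_abs]; exact ckf_bound hc hk _
  have hint_mu : Integrable (fun p => ckf c k p) μ := by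
    refine Integrable.mono' (integrable_const (c (0,0) + k * (2*Real.pi)))
      hccont.aestronglyMeasurable ?_
    exact Filter.Eventually.of_forall fun p => by
      rw [Real.norm_eq_abs]; exact ckf_bound hc hk _
  refine le_of_forall_pos_le_add fun ε hε => ?_
  obtain ⟨m, hm⟩ := exists_nat_gt (4 * k * Real.pi / ε)
  have hπ := Real.pi_pos
  have hm2 : (0:ℝ) < (m:ℝ) + 2 := by positivity
  have herr : 4 * (k * (Real.pi / ((m:ℝ) + 2))) < ε := by
    have h1 : 4 * k * Real.pi < (m:ℝ) * ε := by rwa [div_lt_iff₀ hε] at hm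
    have heq : 4 * (k * (Real.pi/((m:ℝ)+2))) = (4*k*Real.pi)/((m:ℝ)+2) := by ring
    rw [heq, div_lt_iff₀ hm2]
    nlinarith
  set e : ℝ := 2 * (k * (Real.pi / ((m:ℝ) + 2))) with he
  -- grid coefficients
  set A0 : ℝ := ckf c k (grid m 0, grid m 0) with hA0
  set aa : ℕ → ℝ := fun i => ckf c k (grid m (i+1), grid m 0) - ckf c k (grid m i, grid m 0)
    with haa
  set bb : ℕ → ℝ := fun j => ckf c k (grid m 0, grid m (j+1)) - ckf c k (grid m 0, grid m j)
    with hbb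
  set dd : ℕ → ℕ → ℝ := fun i j =>
    ckf c k (grid m (i+1), grid m (j+1)) - ckf c k (grid m (i+1), grid m j)
      - (ckf c k (grid m i, grid m (j+1)) - ckf c k (grid m i, grid m j)) with hdd
  set UC : ℕ → Set ℝ := fun i => {u : ℝ | F (grid m (i+1)) < u} with hUC
  set VC : ℕ → Set ℝ := fun j => {u : ℝ | G (grid m (j+1)) < u} with hVC
  set UM : ℕ → Set (ℝ × ℝ) := fun i => {p : ℝ × ℝ | grid m (i+1) < p.1} with hUM
  set VM : ℕ → Set (ℝ × ℝ) := fun j => {p : ℝ × ℝ | grid m (j+1) < p.2} with hVM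
  have hUCm : ∀ i, MeasurableSet (UC i) := fun i => measurableSet_Ioi
  have hVCm : ∀ j, MeasurableSet (VC j) := fun j => measurableSet_Ioi
  have hUMm : ∀ i, MeasurableSet (UM i) := fun i => measurable_fst measurableSet_Ioi
  have hVMm : ∀ j, MeasurableSet (VM j) := fun j => measurable_snd measurableSet_Ioi
  have hGSc_int : Integrable (GS m A0 aa bb dd UC VC) (volume.restrict (Ioo (0:ℝ) 1)) :=
    integrable_GS _ m A0 aa bb dd UC VC hUCm hVCm
  have hGSm_int : Integrable (GS m A0 aa bb dd UM VM) μ :=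
    integrable_GS _ m A0 aa bb dd UM VM hUMm hVMm
  -- Step B : curve integral bounded by GS integral plus error
  have stepB : (∫ u in Ioo (0:ℝ) 1, ckf c k (gInv F u, gInv G u))
      ≤ (∫ u in Ioo (0:ℝ) 1, GS m A0 aa bb dd UC VC u) + e := by
    have hptw : ∀ u ∈ Ioo (0:ℝ) 1,
        ckf c k (gInv F u, gInv G u) ≤ GS m A0 aa bb dd UC VC u + e := by
      intro u hu
      have heq : GS m A0 aa bb dd UC VC u
          = ckf c k (rr m (gInv F u), rr m (gInv G u)) :=
        GS_eq_point c k m (gInv F u) (gInv G u) UC VC u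
          (fun i _ => (lt_gInv_iff hF hu.1 hu.2).symm)
          (fun j _ => (lt_gInv_iff hG hu.1 hu.2).symm)
      have herr2 := (abs_le.1 (ckf_rr_err hc hk m (gInv F u) (gInv G u))).1
      rw [heq]
      rw [he]
      linarith
    have hmono : (∫ u in Ioo (0:ℝ) 1, ckf c k (gInv F u, gInv G u))
        ≤ ∫ u in Ioo (0:ℝ) 1, (GS m A0 aa bb dd UC VC u + e) := by
      refine integral_mono_ae hint_curve (hGSc_int.add (integrable_const e)) ?_
      rw [Filter.EventuallyLE, ae_restrict_iff' measurableSet_Ioo]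
      exact Filter.Eventually.of_forall hptw
    rwa [integral_add hGSc_int (integrable_const e), integral_const, probReal_univ,
      one_smul] at hmono
  -- Step C : compare the two GS integrals
  have stepC : (∫ u in Ioo (0:ℝ) 1, GS m A0 aa bb dd UC VC u)
      ≤ ∫ p, GS m A0 aa bb dd UM VM p ∂μ := by
    rw [integral_GS _ m A0 aa bb dd UC VC hUCm hVCm,
      integral_GS _ m A0 aa bb dd UM VM hUMm hVMm]
    have hedge1 : ∀ i ∈ Finset.range m,
        aa i * ((volume.restrict (Ioo (0:ℝ) 1)) (UC i)).toReal = aa i * (μ (UM i)).toReal := by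
      intro i _
      have h1 : (volume.restrict (Ioo (0:ℝ) 1)) (UC i)
          = ENNReal.ofReal (1 - F (grid m (i+1))) := curve_margin (hF.nonneg _)
      have h2 : μ (UM i) = 1 - ENNReal.ofReal (F (grid m (i+1))) := mu_margin1 μ hμF _
      rw [h1, h2, ENNReal.toReal_ofReal (by linarith [hF.le_one (grid m (i+1))]),
        toReal_one_sub (hF.nonneg _) (hF.le_one _)]
    have hedge2 : ∀ j ∈ Finset.range m,
        bb j * ((volume.restrict (Ioo (0:ℝ) 1)) (VC j)).toReal = bb j * (μ (VM j)).toReal := by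
      intro j _
      have h1 : (volume.restrict (Ioo (0:ℝ) 1)) (VC j)
          = ENNReal.ofReal (1 - G (grid m (j+1))) := curve_margin (hG.nonneg _)
      have h2 : μ (VM j) = 1 - ENNReal.ofReal (G (grid m (j+1))) := mu_margin2 μ hμG _
      rw [h1, h2, ENNReal.toReal_ofReal (by linarith [hG.le_one (grid m (j+1))]),
        toReal_one_sub (hG.nonneg _) (hG.le_one _)]
    have hPk : PropP (ckf c k) := ckf_propP hc hP hk
    have hjoint : ∀ i ∈ Finset.range m, ∀ j ∈ Finset.range m,
        dd i j * ((volume.restrict (Ioo (0:ℝ) 1)) (UC i ∩ VC j)).toReal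
          ≤ dd i j * (μ (UM i ∩ VM j)).toReal := by
      intro i hi j hj
      rw [Finset.mem_range] at hi hj
      have hd0 : dd i j ≤ 0 := by
        have h5 := hPk (grid_mono (m := m) (i := i) (j := i+1) (by omega) (by omega))
          (grid_mono (m := m) (i := j) (j := j+1) (by omega) (by omega))
        rw [hdd]
        dsimp only
        linarith
      have h1 : (volume.restrict (Ioo (0:ℝ) 1)) (UC i ∩ VC j)
          = ENNReal.ofReal (1 - max (F (grid m (i+1))) (G (grid m (j+1)))) :=
        curve_joint (hF.nonneg _) (hG.nonneg _)
      have hmax1 : max (F (grid m (i+1))) (G (grid m (j+1))) ≤ 1 :=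
        max_le (hF.le_one _) (hG.le_one _)
      have h2 : ((volume.restrict (Ioo (0:ℝ) 1)) (UC i ∩ VC j)).toReal
          = 1 - max (F (grid m (i+1))) (G (grid m (j+1))) := by
        rw [h1, ENNReal.toReal_ofReal (by linarith)]
      have h3 : (μ (UM i ∩ VM j)).toReal
          ≤ 1 - max (F (grid m (i+1))) (G (grid m (j+1))) :=
        mu_joint_le μ hμF hμG hF hG _ _
      rw [h2]
      exact mul_le_mul_of_nonpos_left (by linarith) hd0
    have hsum3 : (∑ i ∈ Finset.range m, ∑ j ∈ Finset.range m,
        dd i j * ((volume.restrict (Ioo (0:ℝ) 1)) (UC i ∩ VC j)).toReal)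
        ≤ ∑ i ∈ Finset.range m, ∑ j ∈ Finset.range m, dd i j * (μ (UM i ∩ VM j)).toReal := by
      refine Finset.sum_le_sum fun i hi => Finset.sum_le_sum fun j hj => hjoint i hi j hj
    have hs1 := Finset.sum_congr rfl hedge1
    have hs2 := Finset.sum_congr rfl hedge2
    rw [hs1, hs2]
    linarith
  -- Step D : rewrite μ-side GS integral
  have stepD : (∫ p, GS m A0 aa bb dd UM VM p ∂μ)
      = ∫ p, ckf c k (rr m p.1, rr m p.2) ∂μ := by
    refine integral_congr_ae (Filter.Eventually.of_forall fun p => ?_)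
    exact GS_eq_point c k m p.1 p.2 UM VM p (fun i _ => Iff.rfl) (fun j _ => Iff.rfl)
  -- Step E
  have hrr_int : Integrable (fun p : ℝ × ℝ => ckf c k (rr m p.1, rr m p.2)) μ := by
    refine hGSm_int.congr (Filter.Eventually.of_forall fun p => ?_)
    exact GS_eq_point c k m p.1 p.2 UM VM p (fun i _ => Iff.rfl) (fun j _ => Iff.rfl)
  have stepE : (∫ p, ckf c k (rr m p.1, rr m p.2) ∂μ) ≤ (∫ p, ckf c k p ∂μ) + e := by
    have hptw : ∀ p : ℝ × ℝ, ckf c k (rr m p.1, rr m p.2) ≤ ckf c k p + e := by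
      intro p
      have herr2 := (abs_le.1 (ckf_rr_err hc hk m p.1 p.2)).2
      have hpp : ckf c k (p.1, p.2) = ckf c k p := by rw [Prod.mk.eta]
      rw [he]
      rw [hpp] at herr2
      linarith
    have hmono : (∫ p, ckf c k (rr m p.1, rr m p.2) ∂μ)
        ≤ ∫ p, (ckf c k p + e) ∂μ :=
      integral_mono hrr_int (hint_mu.add (integrable_const e)) hptw
    rwa [integral_add hint_mu (integrable_const e), integral_const, probReal_univ,
      one_smul] at hmono
  have := stepB.trans (by linarith [stepC, stepE, stepD] :
    (∫ u in Ioo (0:ℝ) 1, GS m A0 aa bb dd UC VC u) + e ≤ (∫ p, ckf c k p ∂μ) + e + e)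
  rw [he] at this
  linarith
end Main


/-- For any coupling `μ` of `F` and `G`, the cost `∫ c dμ` is at least the comonotone
cost `∫₀¹ c (F⁻ u, G⁻ u) du`. -/
theorem stmt_1 (c : ℝ × ℝ → ℝ) (hc_cont : Continuous c) (hc_nonneg : ∀ p, 0 ≤ c p)
    (hP : PropP c) (F G : ℝ → ℝ) (hF : IsCDF F) (hG : IsCDF G)
    (μ : Measure (ℝ × ℝ)) (hμ : IsProbabilityMeasure μ)
    (hμF : ∀ x : ℝ, μ.fst (Iic x) = ENNReal.ofReal (F x))
    (hμG : ∀ y : ℝ, μ.snd (Iic y) = ENNReal.ofReal (G y)) :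
    (∫⁻ u in Ioo (0 : ℝ) 1, ENNReal.ofReal (c (gInv F u, gInv G u))) ≤
      ∫⁻ p, ENNReal.ofReal (c p) ∂μ := by
  haveI : IsProbabilityMeasure (volume.restrict (Ioo (0:ℝ) 1)) := prob_restrict
  have hmeas : AEMeasurable (fun u => (gInv F u, gInv G u)) (volume.restrict (Ioo (0:ℝ) 1)) :=
    (aemeasurable_restrict_of_monotoneOn measurableSet_Ioo (gInv_monotoneOn hF)).prodMk
      (aemeasurable_restrict_of_monotoneOn measurableSet_Ioo (gInv_monotoneOn hG))
  have hkkey : ∀ k : ℕ,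
      (∫⁻ u in Ioo (0:ℝ) 1, ENNReal.ofReal (ckf c (k : ℝ) (gInv F u, gInv G u)))
        ≤ ∫⁻ p, ENNReal.ofReal (c p) ∂μ := by
    intro k
    have hk : (0:ℝ) ≤ (k : ℝ) := Nat.cast_nonneg k
    have hccont := ckf_continuous hc_nonneg hk
    have hint_curve : Integrable (fun u => ckf c (k:ℝ) (gInv F u, gInv G u))
        (volume.restrict (Ioo (0:ℝ) 1)) := by
      refine Integrable.mono' (integrable_const (c (0,0) + (k:ℝ) * (2*Real.pi)))
        (hccont.measurable.comp_aemeasurable hmeas).aestronglyMeasurable ?_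
      exact Filter.Eventually.of_forall fun u => by
        rw [Real.norm_eq_abs]; exact ckf_bound hc_nonneg hk _
    have hint_mu : Integrable (fun p => ckf c (k:ℝ) p) μ := by
      refine Integrable.mono' (integrable_const (c (0,0) + (k:ℝ) * (2*Real.pi)))
        hccont.aestronglyMeasurable ?_
      exact Filter.Eventually.of_forall fun p => by
        rw [Real.norm_eq_abs]; exact ckf_bound hc_nonneg hk _
    have h1 : (∫⁻ u in Ioo (0:ℝ) 1, ENNReal.ofReal (ckf c (k:ℝ) (gInv F u, gInv G u)))
        = ENNReal.ofReal (∫ u in Ioo (0:ℝ) 1, ckf c (k:ℝ) (gInv F u, gInv G u)) :=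
      (ofReal_integral_eq_lintegral_ofReal hint_curve
        (Filter.Eventually.of_forall fun u => ckf_nonneg hc_nonneg hk _)).symm
    have h2 : ENNReal.ofReal (∫ p, ckf c (k:ℝ) p ∂μ)
        = ∫⁻ p, ENNReal.ofReal (ckf c (k:ℝ) p) ∂μ :=
      ofReal_integral_eq_lintegral_ofReal hint_mu
        (Filter.Eventually.of_forall fun p => ckf_nonneg hc_nonneg hk _)
    have h3 : (∫⁻ p, ENNReal.ofReal (ckf c (k:ℝ) p) ∂μ) ≤ ∫⁻ p, ENNReal.ofReal (c p) ∂μ :=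
      lintegral_mono fun p => ENNReal.ofReal_le_ofReal (ckf_le hc_nonneg hk p)
    calc (∫⁻ u in Ioo (0:ℝ) 1, ENNReal.ofReal (ckf c (k:ℝ) (gInv F u, gInv G u)))
        = ENNReal.ofReal (∫ u in Ioo (0:ℝ) 1, ckf c (k:ℝ) (gInv F u, gInv G u)) := h1
      _ ≤ ENNReal.ofReal (∫ p, ckf c (k:ℝ) p ∂μ) :=
          ENNReal.ofReal_le_ofReal (key_k hc_nonneg hP hF hG μ hμF hμG hk hccont)
      _ = ∫⁻ p, ENNReal.ofReal (ckf c (k:ℝ) p) ∂μ := h2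
      _ ≤ _ := h3
  have hptsup : ∀ q : ℝ × ℝ,
      ENNReal.ofReal (c q) = ⨆ k : ℕ, ENNReal.ofReal (ckf c (k:ℝ) q) := by
    intro q
    have hmono : Monotone (fun k : ℕ => ENNReal.ofReal (ckf c (k:ℝ) q)) := by
      intro a b hab
      exact ENNReal.ofReal_le_ofReal
        (ckf_mono_k hc_nonneg (Nat.cast_nonneg a) (Nat.cast_le.2 hab) q)
    have htd : Filter.Tendsto (fun k : ℕ => ENNReal.ofReal (ckf c (k:ℝ) q)) Filter.atTop
        (nhds (ENNReal.ofReal (c q))) :=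
      (ENNReal.continuous_ofReal.tendsto _).comp (ckf_tendsto hc_cont hc_nonneg q)
    exact (tendsto_nhds_unique (tendsto_atTop_iSup hmono) htd).symm
  have hmeas_k : ∀ k : ℕ, AEMeasurable
      (fun u => ENNReal.ofReal (ckf c (k:ℝ) (gInv F u, gInv G u)))
      (volume.restrict (Ioo (0:ℝ) 1)) := fun k =>
    ENNReal.measurable_ofReal.comp_aemeasurable
      ((ckf_continuous hc_nonneg (Nat.cast_nonneg k)).measurable.comp_aemeasurable hmeas)
  have hmono_ae : ∀ᵐ u ∂(volume.restrict (Ioo (0:ℝ) 1)),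
      Monotone fun k : ℕ => ENNReal.ofReal (ckf c (k:ℝ) (gInv F u, gInv G u)) := by
    refine Filter.Eventually.of_forall fun u => ?_
    intro a b hab
    exact ENNReal.ofReal_le_ofReal
      (ckf_mono_k hc_nonneg (Nat.cast_nonneg a) (Nat.cast_le.2 hab) _)
  have hls := lintegral_iSup' hmeas_k hmono_ae
  have hrw : (∫⁻ u in Ioo (0 : ℝ) 1, ENNReal.ofReal (c (gInv F u, gInv G u)))
      = ∫⁻ u in Ioo (0:ℝ) 1, ⨆ k : ℕ, ENNReal.ofReal (ckf c (k:ℝ) (gInv F u, gInv G u)) :=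
    lintegral_congr_ae (Filter.Eventually.of_forall fun u => hptsup _)
  rw [hrw, hls]
  exact iSup_le hkkey
end

section
/- For every real p ≥ 1, the function c : ℝ × ℝ → ℝ defined by c(x, y) = |x − y|ᵖ satisfies property 𝒫. -/
lemma convexOn_abs_rpow {p : ℝ} (hp : 1 ≤ p) :
    ConvexOn ℝ Set.univ (fun t : ℝ => |t| ^ p) := by
  have himg : (fun t : ℝ => |t|) '' Set.univ = Set.Ici (0 : ℝ) := by
    ext a
    constructor
    · rintro ⟨t, -, rfl⟩; exact abs_nonneg t
    · intro ha; exact ⟨a, trivial, abs_of_nonneg ha⟩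
  have hg : ConvexOn ℝ ((fun t : ℝ => |t|) '' Set.univ) (fun x : ℝ => x ^ p) := by
    rw [himg]; exact convexOn_rpow hp
  have hf : ConvexOn ℝ Set.univ (fun t : ℝ => |t|) := by
    exact convexOn_univ_norm (E := ℝ)
  have hmono : MonotoneOn (fun x : ℝ => x ^ p) ((fun t : ℝ => |t|) '' Set.univ) := by
    rw [himg]
    exact fun a ha b _ hab => Real.rpow_le_rpow ha hab (le_trans zero_le_one hp)
  exact hg.comp hf hmono

lemma quad {f : ℝ → ℝ} (hf : ConvexOn ℝ Set.univ f) {a b c d : ℝ}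
    (hab : a ≤ b) (hbd : b ≤ d) (hsum : a + d = b + c) :
    f b + f c ≤ f a + f d := by
  rcases eq_or_lt_of_le (hab.trans hbd) with h | h
  · have hb : b = a := le_antisymm (by linarith) hab
    have hc : c = d := by linarith
    rw [hb, hc]
  · set l := (d - b) / (d - a) with hl
    have hda : 0 < d - a := by linarith
    have hl0 : 0 ≤ l := div_nonneg (by linarith) hda.le
    have hl1 : l ≤ 1 := (div_le_one hda).mpr (by linarith)
    have hm0 : 0 ≤ 1 - l := by linarith
    have hb' : b = l * a + (1 - l) * d := by
      have h' : l * (d - a) = d - b := by rw [hl]; exact div_mul_cancel₀ _ hda.ne'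
      linarith
    have hc' : c = (1 - l) * a + l * d := by
      have : c = a + d - b := by linarith
      rw [this, hb']; ring
    have h1 : f b ≤ l * f a + (1 - l) * f d := by
      have := hf.2 (Set.mem_univ a) (Set.mem_univ d) hl0 hm0 (by ring)
      simpa [hb'.symm, smul_eq_mul] using this
    have h2 : f c ≤ (1 - l) * f a + l * f d := by
      have := hf.2 (Set.mem_univ a) (Set.mem_univ d) hm0 hl0 (by ring)
      simpa [hc'.symm, smul_eq_mul] using this
    linarith

theorem stmt_6 (p : ℝ) (hp : 1 ≤ p) :
    PropP (fun q => |q.1 - q.2| ^ p) := by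
  intro x x' y y' hx hy
  simp only
  have := quad (convexOn_abs_rpow hp) (a := x - y') (b := x - y) (c := x' - y')
    (d := x' - y) (by linarith) (by linarith) (by ring)
  linarith
end

section
/- Let (Ω, 𝒜, ℙ) be a probability space and let H : Ω × (0,1) → ℝ be jointly measurable, with H(ω, ·) nondecreasing for each ω (H represents the generalized inverse of a random c.d.f. 𝔽). Let c : ℝ × ℝ → ℝ be a nonnegative measurable function. Suppose g* : (0,1) → ℝ is nondecreasing and satisfies, for almost every u ∈ (0,1), E[ c(H(·, u), g*(u)) ] = inf_{s ∈ ℝ} E[ c(H(·, u), s) ]. Then for every nondecreasing function g : (0,1) → ℝ, E[ ∫₀¹ c(H(·, u), g*(u)) du ] ≤ E[ ∫₀¹ c(H(·, u), g(u)) du ]. That is, the c-contrasted Fréchet feature ℰ_c 𝔽 has generalized inverse (ℰ_c 𝔽)⁻(u) = argmin_{s ∈ ℝ} E c(𝔽⁻(u), s). -/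
open MeasureTheory Set ENNReal

/-- If the nondecreasing function `g*` minimizes `s ↦ E c(H(·,u), s)` pointwise in `u`,
then the c.d.f. with generalized inverse `g*` (the `c`-contrasted Fréchet feature) minimizes
`G ↦ E W_c(𝔽, G)` among c.d.f.'s, i.e. among nondecreasing candidate inverses `g`. -/
theorem stmt_9 {Ω : Type*} [MeasurableSpace Ω] (P : Measure Ω) [IsProbabilityMeasure P]
    (H : Ω × ℝ → ℝ) (hH : Measurable H)
    (hHmono : ∀ ω, MonotoneOn (fun u => H (ω, u)) (Ioo (0 : ℝ) 1))
    (c : ℝ × ℝ → ℝ) (hc : Measurable c) (hc_nonneg : ∀ p, 0 ≤ c p)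
    (gstar : ℝ → ℝ) (hgstar : MonotoneOn gstar (Ioo (0 : ℝ) 1))
    (hmin : ∀ᵐ u ∂(volume.restrict (Ioo (0 : ℝ) 1)),
      (∫⁻ ω, ENNReal.ofReal (c (H (ω, u), gstar u)) ∂P)
        = ⨅ s : ℝ, ∫⁻ ω, ENNReal.ofReal (c (H (ω, u), s)) ∂P)
    (g : ℝ → ℝ) (hg : MonotoneOn g (Ioo (0 : ℝ) 1)) :
    (∫⁻ ω, (∫⁻ u in Ioo (0 : ℝ) 1, ENNReal.ofReal (c (H (ω, u), gstar u))) ∂P)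
      ≤ ∫⁻ ω, (∫⁻ u in Ioo (0 : ℝ) 1, ENNReal.ofReal (c (H (ω, u), g u))) ∂P := by
  set ν := volume.restrict (Ioo (0 : ℝ) 1) with hν
  have hsnd : AEMeasurable (fun p : Ω × ℝ => p.2) (P.prod ν) :=
    measurable_snd.aemeasurable
  have key : ∀ (f : ℝ → ℝ), MonotoneOn f (Ioo (0 : ℝ) 1) →
      AEMeasurable (Function.uncurry fun ω u => ENNReal.ofReal (c (H (ω, u), f u)))
        (P.prod ν) := by
    intro f hf
    have hfm : AEMeasurable f ν :=
      aemeasurable_restrict_of_monotoneOn measurableSet_Ioo hf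
    have hfm' : AEMeasurable (fun p : Ω × ℝ => f p.2) (P.prod ν) :=
      hfm.comp_quasiMeasurePreserving Measure.quasiMeasurePreserving_snd
    exact (ENNReal.measurable_ofReal.comp hc).comp_aemeasurable
      (hH.aemeasurable.prodMk hfm')
  have hswap1 := MeasureTheory.lintegral_lintegral_swap (μ := P) (ν := ν)
    (key gstar hgstar)
  have hswap2 := MeasureTheory.lintegral_lintegral_swap (μ := P) (ν := ν)
    (key g hg)
  rw [show (∫⁻ ω, (∫⁻ u in Ioo (0 : ℝ) 1, ENNReal.ofReal (c (H (ω, u), gstar u))) ∂P)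
      = ∫⁻ ω, (∫⁻ u, ENNReal.ofReal (c (H (ω, u), gstar u)) ∂ν) ∂P from rfl,
    show (∫⁻ ω, (∫⁻ u in Ioo (0 : ℝ) 1, ENNReal.ofReal (c (H (ω, u), g u))) ∂P)
      = ∫⁻ ω, (∫⁻ u, ENNReal.ofReal (c (H (ω, u), g u)) ∂ν) ∂P from rfl,
    hswap1, hswap2]
  refine lintegral_mono_ae ?_
  filter_upwards [hmin] with u hu
  rw [hu]
  exact iInf_le _ (g u)
end

section
/- Let (Ω, 𝒜, ℙ) be a probability space and let H : Ω × (0,1) → ℝ be jointly measurable with H(ω, ·) nondecreasing for each ω, and with H(·, u) square-integrable for each u and ∫₀¹ E[H(·,u)²] du < ∞. Define m(u) = E[H(·, u)]. Then m is nondecreasing on (0,1), and for every nondecreasing function g : (0,1) → ℝ, E[ ∫₀¹ (H(·, u) − m(u))² du ] ≤ E[ ∫₀¹ (H(·, u) − g(u))² du ]. That is, the Fréchet mean of a random c.d.f. 𝔽 in the Wasserstein₂ space is the c.d.f. whose generalized inverse is u ↦ E[𝔽⁻(u)]. -/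
open MeasureTheory Set ENNReal

lemma key_mean_min {Ω : Type*} [MeasurableSpace Ω] (P : Measure Ω) [IsProbabilityMeasure P]
    (X : Ω → ℝ) (hX : MemLp X 2 P) (c : ℝ) :
    ∫ ω, (X ω - ∫ ω', X ω' ∂P) ^ 2 ∂P ≤ ∫ ω, (X ω - c) ^ 2 ∂P := by
  set m := ∫ ω', X ω' ∂P with hm
  have hXi : Integrable X P := hX.integrable one_le_two
  have hX2 : Integrable (fun ω => X ω ^ 2) P := hX.integrable_sq
  have expand : ∀ d : ℝ, ∫ ω, (X ω - d) ^ 2 ∂P = (∫ ω, X ω ^ 2 ∂P) - 2 * d * m + d ^ 2 := by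
    intro d
    have h1 : (fun ω => (X ω - d) ^ 2) = fun ω => X ω ^ 2 - 2 * d * X ω + d ^ 2 := by
      funext ω; ring
    have h2 : Integrable (fun ω => X ω ^ 2 - 2 * d * X ω) P := by
      exact hX2.sub (hXi.const_mul _)
    have h3 : Integrable (fun ω => 2 * d * X ω) P := hXi.const_mul _
    rw [h1, integral_add h2 (integrable_const _),
      integral_sub hX2 h3, integral_const_mul, integral_const]
    simp [hm]
  rw [expand m, expand c]
  nlinarith [sq_nonneg (m - c)]

/-- The Fréchet mean of a random c.d.f. in the Wasserstein₂ space is the c.d.f. whose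
generalized inverse is `u ↦ E[𝔽⁻(u)]`: the function `m(u) = E[H(·,u)]` is nondecreasing,
and it minimizes `g ↦ E ∫₀¹ (H(·,u) − g(u))² du` over nondecreasing `g`. -/
theorem stmt_10 {Ω : Type*} [MeasurableSpace Ω] (P : Measure Ω) [IsProbabilityMeasure P]
    (H : Ω × ℝ → ℝ) (hH : Measurable H)
    (hHmono : ∀ ω, MonotoneOn (fun u => H (ω, u)) (Ioo (0 : ℝ) 1))
    (hL2 : ∀ u ∈ Ioo (0 : ℝ) 1, MemLp (fun ω => H (ω, u)) 2 P)
    (hint : IntegrableOn (fun u => ∫ ω, (H (ω, u)) ^ 2 ∂P) (Ioo (0 : ℝ) 1)) :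
    MonotoneOn (fun u => ∫ ω, H (ω, u) ∂P) (Ioo (0 : ℝ) 1) ∧
      ∀ g : ℝ → ℝ, MonotoneOn g (Ioo (0 : ℝ) 1) →
        (∫⁻ ω, (∫⁻ u in Ioo (0 : ℝ) 1,
            ENNReal.ofReal ((H (ω, u) - ∫ ω', H (ω', u) ∂P) ^ 2)) ∂P)
          ≤ ∫⁻ ω, (∫⁻ u in Ioo (0 : ℝ) 1,
            ENNReal.ofReal ((H (ω, u) - g u) ^ 2)) ∂P := by
  -- measurability of m
  have hHswap : Measurable (fun p : ℝ × Ω => H (p.2, p.1)) := hH.comp measurable_swap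
  have hm_meas : Measurable (fun u => ∫ ω, H (ω, u) ∂P) := by
    have := hHswap.stronglyMeasurable.integral_prod_right' (ν := P)
    exact this.measurable
  constructor
  · intro u hu v hv huv
    exact integral_mono ((hL2 u hu).integrable one_le_two)
      ((hL2 v hv).integrable one_le_two) (fun ω => hHmono ω hu hv huv)
  · intro g hg
    set m := fun u => ∫ ω, H (ω, u) ∂P with hmdef
    have hIoo : MeasurableSet (Ioo (0 : ℝ) 1) := measurableSet_Ioo
    have hg_meas : AEMeasurable g ((volume : Measure ℝ).restrict (Ioo 0 1)) :=
      aemeasurable_restrict_of_monotoneOn hIoo hg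
    -- swap LHS
    have hfL : AEMeasurable (fun p : Ω × ℝ => ENNReal.ofReal ((H p - m p.2) ^ 2))
        (P.prod ((volume : Measure ℝ).restrict (Ioo 0 1))) := by
      exact (measurable_ofReal.comp (((hH.sub (hm_meas.comp measurable_snd)).pow_const
        2))).aemeasurable
    have hfR : AEMeasurable (fun p : Ω × ℝ => ENNReal.ofReal ((H p - g p.2) ^ 2))
        (P.prod ((volume : Measure ℝ).restrict (Ioo 0 1))) := by
      have hgp : AEMeasurable (fun p : Ω × ℝ => g p.2)
          (P.prod ((volume : Measure ℝ).restrict (Ioo 0 1))) :=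
        AEMeasurable.comp_snd (μ := P) hg_meas
      exact ((hH.aemeasurable.sub hgp).pow_const 2).ennreal_ofReal
    have swapL := lintegral_lintegral_swap (μ := P)
      (ν := (volume : Measure ℝ).restrict (Ioo 0 1))
      (f := fun ω u => ENNReal.ofReal ((H (ω, u) - m u) ^ 2)) hfL
    have swapR := lintegral_lintegral_swap (μ := P)
      (ν := (volume : Measure ℝ).restrict (Ioo 0 1))
      (f := fun ω u => ENNReal.ofReal ((H (ω, u) - g u) ^ 2)) hfR
    rw [show (fun ω => ∫⁻ u in Ioo (0:ℝ) 1, ENNReal.ofReal ((H (ω, u) - ∫ ω', H (ω', u) ∂P) ^ 2))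
        = fun ω => ∫⁻ u in Ioo (0:ℝ) 1, ENNReal.ofReal ((H (ω, u) - m u) ^ 2) from rfl]
    rw [swapL, swapR]
    -- pointwise comparison in u
    refine lintegral_mono_ae ?_
    filter_upwards [ae_restrict_mem hIoo] with u hu
    have hX := hL2 u hu
    have hXi1 : Integrable (fun ω => (H (ω, u) - m u) ^ 2) P :=
      (hX.sub (memLp_const (m u))).integrable_sq
    have hXi2 : Integrable (fun ω => (H (ω, u) - g u) ^ 2) P :=
      (hX.sub (memLp_const (g u))).integrable_sq
    rw [← ofReal_integral_eq_lintegral_ofReal hXi1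
        (Filter.Eventually.of_forall fun ω => sq_nonneg _),
      ← ofReal_integral_eq_lintegral_ofReal hXi2
        (Filter.Eventually.of_forall fun ω => sq_nonneg _)]
    exact ENNReal.ofReal_le_ofReal (key_mean_min P _ hX (g u))
end

section
/- Let F₀ : ℝ → [0,1] be a continuous, strictly increasing c.d.f., and let M and Σ be real random variables on a probability space (Ω, 𝒜, ℙ) with Σ > 0 almost surely and E[M²] < ∞, E[Σ²] < ∞, and ∫₀¹ F₀⁻¹(u)² du < ∞. Consider the random c.d.f. 𝔽(x) = F₀((x − M)/Σ), whose generalized inverse is 𝔽⁻¹(u) = Σ F₀⁻¹(u) + M. Then the Fréchet mean of 𝔽 in the Wasserstein₂ space is the c.d.f. x ↦ F₀((x − E[M])/E[Σ]); equivalently, its generalized inverse is u ↦ E[Σ] F₀⁻¹(u) + E[M]. -/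
open MeasureTheory Set ENNReal

lemma mean_min {Ω : Type*} [MeasurableSpace Ω] (P : Measure Ω) [IsProbabilityMeasure P]
    (X : Ω → ℝ) (hX : MemLp X 2 P) (a : ℝ) :
    ∫⁻ ω, ENNReal.ofReal ((X ω - ∫ ω', X ω' ∂P) ^ 2) ∂P
      ≤ ∫⁻ ω, ENNReal.ofReal ((X ω - a) ^ 2) ∂P := by
  set μ := ∫ ω', X ω' ∂P with hμ
  have hib : ∀ b : ℝ, Integrable (fun ω => (X ω - b) ^ 2) P := fun b =>
    (hX.sub (memLp_const b)).integrable_sq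
  have hXi : Integrable X P := hX.integrable one_le_two
  rw [← ofReal_integral_eq_lintegral_ofReal (hib μ) (Filter.Eventually.of_forall fun ω => sq_nonneg _),
    ← ofReal_integral_eq_lintegral_ofReal (hib a) (Filter.Eventually.of_forall fun ω => sq_nonneg _)]
  apply ENNReal.ofReal_le_ofReal
  have hsub : Integrable (fun ω => X ω - μ) P := hXi.sub (integrable_const μ)
  have h0 : ∫ ω, (X ω - μ) ∂P = 0 := by
    rw [integral_sub hXi (integrable_const μ), integral_const]
    simp [hμ]
  calc ∫ ω, (X ω - μ) ^ 2 ∂P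
      ≤ ∫ ω, (X ω - μ) ^ 2 ∂P + (μ - a) ^ 2 := le_add_of_nonneg_right (sq_nonneg _)
    _ = ∫ ω, (X ω - a) ^ 2 ∂P := by
        have : (fun ω => (X ω - a) ^ 2)
            = fun ω => (X ω - μ) ^ 2 + (2 * (μ - a) * (X ω - μ) + (μ - a) ^ 2) :=
          funext fun ω => by ring
        have hg1 : Integrable (fun ω => 2 * (μ - a) * (X ω - μ)) P := hsub.const_mul _
        have hg2 : Integrable (fun ω => 2 * (μ - a) * (X ω - μ) + (μ - a) ^ 2) P :=
          hg1.add (integrable_const _)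
        rw [this, integral_add (hib μ) hg2, integral_add hg1 (integrable_const _),
          integral_const_mul, h0, integral_const]
        simp

/-- For the random c.d.f. `𝔽(x) = F₀((x − M)/Σ)`, with generalized inverse
`𝔽⁻¹(u) = Σ F₀⁻¹(u) + M`, the Fréchet mean in the Wasserstein₂ space is the c.d.f.
`x ↦ F₀((x − E M)/E Σ)`: its generalized inverse is `u ↦ E[Σ] F₀⁻¹(u) + E[M]`, and that
inverse minimizes `g ↦ E ∫₀¹ (𝔽⁻¹(u) − g(u))² du` over nondecreasing `g`. -/
theorem stmt_12 {Ω : Type*} [MeasurableSpace Ω] (P : Measure Ω) [IsProbabilityMeasure P]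
    (F₀ : ℝ → ℝ) (hF₀ : IsCDF F₀) (hcont : Continuous F₀) (hstrict : StrictMono F₀)
    (F₀inv : ℝ → ℝ) (hinv : ∀ u ∈ Ioo (0 : ℝ) 1, F₀ (F₀inv u) = u)
    (M S : Ω → ℝ) (hMmeas : Measurable M) (hSmeas : Measurable S)
    (hSpos : ∀ᵐ ω ∂P, 0 < S ω)
    (hM2 : MemLp M 2 P) (hS2 : MemLp S 2 P)
    (hF₀inv2 : IntegrableOn (fun u => (F₀inv u) ^ 2) (Ioo (0 : ℝ) 1)) :
    (∀ u ∈ Ioo (0 : ℝ) 1,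
        gInv (fun x => F₀ ((x - ∫ ω, M ω ∂P) / ∫ ω, S ω ∂P)) u
          = (∫ ω, S ω ∂P) * F₀inv u + ∫ ω, M ω ∂P) ∧
      ∀ g : ℝ → ℝ, MonotoneOn g (Ioo (0 : ℝ) 1) →
        (∫⁻ ω, (∫⁻ u in Ioo (0 : ℝ) 1,
            ENNReal.ofReal ((S ω * F₀inv u + M ω
              - ((∫ ω', S ω' ∂P) * F₀inv u + ∫ ω', M ω' ∂P)) ^ 2)) ∂P)
          ≤ ∫⁻ ω, (∫⁻ u in Ioo (0 : ℝ) 1,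
            ENNReal.ofReal ((S ω * F₀inv u + M ω - g u) ^ 2)) ∂P := by
  set m := ∫ ω, M ω ∂P with hm
  set s := ∫ ω, S ω ∂P with hsdef
  have hSi : Integrable S P := hS2.integrable one_le_two
  have hMi : Integrable M P := hM2.integrable one_le_two
  have hs : 0 < s := by
    rw [hsdef, integral_pos_iff_support_of_nonneg_ae
      (hSpos.mono fun ω h => le_of_lt h) hSi]
    have h1 : {ω | 0 < S ω} ⊆ Function.support S := fun ω h => ne_of_gt h
    have h2 : (1 : ℝ≥0∞) = P {ω | 0 < S ω} := by
      symm
      rw [← measure_univ (μ := P)]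
      apply measure_congr
      filter_upwards [hSpos] with ω h
      exact eq_true h
    calc (0 : ℝ≥0∞) < 1 := zero_lt_one
      _ = P {ω | 0 < S ω} := h2
      _ ≤ P (Function.support S) := measure_mono h1
  -- the inverse of F₀ composed with affine map
  have hset : ∀ u ∈ Ioo (0 : ℝ) 1,
      {x : ℝ | u ≤ F₀ ((x - m) / s)} = Ici (s * F₀inv u + m) := by
    intro u hu
    have hiff : ∀ y : ℝ, u ≤ F₀ y ↔ F₀inv u ≤ y := fun y => by
      rw [← hstrict.le_iff_le (a := F₀inv u) (b := y), hinv u hu]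
    ext x
    simp only [mem_setOf_eq, mem_Ici]
    rw [hiff, le_div_iff₀ hs]
    constructor <;> intro h <;> nlinarith
  constructor
  · intro u hu
    rw [gInv, hset u hu, csInf_Ici]
  · intro g hg
    -- measurability on (0,1)
    have hcmono : MonotoneOn F₀inv (Ioo (0 : ℝ) 1) := by
      intro u hu v hv huv
      rw [← hstrict.le_iff_le, hinv u hu, hinv v hv]
      exact huv
    set ν : Measure ℝ := volume.restrict (Ioo (0 : ℝ) 1) with hν
    have hcm : AEMeasurable F₀inv ν :=
      aemeasurable_restrict_of_monotoneOn measurableSet_Ioo hcmono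
    have hgm : AEMeasurable g ν :=
      aemeasurable_restrict_of_monotoneOn measurableSet_Ioo hg
    have hXm : AEMeasurable (fun p : Ω × ℝ => S p.1 * F₀inv p.2 + M p.1) (P.prod ν) :=
      ((hSmeas.aemeasurable.comp_fst.mul hcm.comp_snd).add hMmeas.aemeasurable.comp_fst)
    have hL : AEMeasurable
        (Function.uncurry fun ω u => ENNReal.ofReal
          ((S ω * F₀inv u + M ω - (s * F₀inv u + m)) ^ 2)) (P.prod ν) := by
      apply ENNReal.measurable_ofReal.comp_aemeasurable
      exact (hXm.sub ((aemeasurable_const.mul hcm.comp_snd).add aemeasurable_const)).pow_const 2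
    have hR : AEMeasurable
        (Function.uncurry fun ω u => ENNReal.ofReal
          ((S ω * F₀inv u + M ω - g u) ^ 2)) (P.prod ν) := by
      apply ENNReal.measurable_ofReal.comp_aemeasurable
      exact (hXm.sub hgm.comp_snd).pow_const 2
    rw [lintegral_lintegral_swap hL, lintegral_lintegral_swap hR]
    apply lintegral_mono
    intro u
    have hX2 : MemLp (fun ω => S ω * F₀inv u + M ω) 2 P := by
      have h1 : MemLp (fun ω => F₀inv u * S ω) 2 P := hS2.const_mul (F₀inv u)
      have h2 : (fun ω => S ω * F₀inv u + M ω) = fun ω => F₀inv u * S ω + M ω :=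
        funext fun ω => by ring
      rw [h2]
      exact h1.add hM2
    have hEX : (∫ ω, (S ω * F₀inv u + M ω) ∂P) = s * F₀inv u + m := by
      rw [integral_add (hSi.mul_const _) hMi, integral_mul_const, hsdef, hm,
        mul_comm]
    have := mean_min P (fun ω => S ω * F₀inv u + M ω) hX2 (g u)
    rwa [hEX] at this
end

section
/- Let F₀ : ℝ → [0,1] be a continuous, strictly increasing c.d.f., let M be an integrable real random variable, and let α ∈ (0,1). Consider the random c.d.f. 𝔽(x) = F₀(x − M), with generalized inverse 𝔽⁻¹(u) = F₀⁻¹(u) + M. Then for every u ∈ (0,1), the α-quantile of the real random variable 𝔽⁻¹(u) equals F₀⁻¹(u) + q_α(M); equivalently, the α-quantile Fréchet feature of 𝔽 is the c.d.f. x ↦ F₀(x − q_α(M)). -/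
open MeasureTheory Set

/-- The (lower) `α`-quantile of a real random variable `Z`:
`q_α(Z) = inf {t | ℙ(Z ≤ t) ≥ α}`. -/
noncomputable def lowerQuantile {Ω : Type*} [MeasurableSpace Ω] (P : Measure Ω)
    (α : ℝ) (Z : Ω → ℝ) : ℝ :=
  sInf {t : ℝ | α ≤ (P {ω | Z ω ≤ t}).toReal}

/-- For the random c.d.f. `𝔽(x) = F₀(x − M)`, with generalized inverse
`𝔽⁻¹(u) = F₀⁻¹(u) + M`, the `α`-quantile of the real r.v. `𝔽⁻¹(u)` is
`F₀⁻¹(u) + q_α(M)`; equivalently, the `α`-quantile Fréchet feature of `𝔽` is the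
c.d.f. `x ↦ F₀(x − q_α(M))`, whose generalized inverse at `u` is `F₀⁻¹(u) + q_α(M)`. -/
theorem stmt_14 {Ω : Type*} [MeasurableSpace Ω] (P : Measure Ω) [IsProbabilityMeasure P]
    (F₀ : ℝ → ℝ) (hF₀ : IsCDF F₀) (hcont : Continuous F₀) (hstrict : StrictMono F₀)
    (F₀inv : ℝ → ℝ) (hinv : ∀ u ∈ Ioo (0 : ℝ) 1, F₀ (F₀inv u) = u)
    (M : Ω → ℝ) (hMmeas : Measurable M) (hMint : Integrable M P)
    (α : ℝ) (hα : α ∈ Ioo (0 : ℝ) 1) :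
    ∀ u ∈ Ioo (0 : ℝ) 1,
      lowerQuantile P α (fun ω => F₀inv u + M ω) = F₀inv u + lowerQuantile P α M ∧
        gInv (fun x => F₀ (x - lowerQuantile P α M)) u
          = F₀inv u + lowerQuantile P α M := by
  intro u hu
  set S₀ : Set ℝ := {t : ℝ | α ≤ (P {ω | M ω ≤ t}).toReal} with hS₀
  -- monotonicity of t ↦ (P {M ≤ t}).toReal
  have hmono : ∀ s t : ℝ, s ≤ t → (P {ω | M ω ≤ s}).toReal ≤ (P {ω | M ω ≤ t}).toReal := by
    intro s t hst
    exact ENNReal.toReal_mono (measure_ne_top P _)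
      (measure_mono fun ω hω => le_trans hω hst)
  -- S₀ is nonempty
  have hne : S₀.Nonempty := by
    have hU : (⋃ n : ℕ, {ω | M ω ≤ (n : ℝ)}) = Set.univ := by
      ext ω; simp only [mem_iUnion, mem_setOf_eq, mem_univ, iff_true]
      obtain ⟨n, hn⟩ := exists_nat_ge (M ω)
      exact ⟨n, hn⟩
    have hmonoU : Monotone fun n : ℕ => {ω | M ω ≤ (n : ℝ)} := by
      intro m n hmn ω hω
      simp only [mem_setOf_eq] at hω ⊢
      exact le_trans hω (by exact_mod_cast hmn)
    have h1 : Filter.Tendsto (fun n : ℕ => P {ω | M ω ≤ (n : ℝ)}) Filter.atTop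
        (nhds (P (⋃ n : ℕ, {ω | M ω ≤ (n : ℝ)}))) :=
      tendsto_measure_iUnion_atTop hmonoU
    rw [hU, measure_univ] at h1
    have h2 : Filter.Tendsto (fun n : ℕ => (P {ω | M ω ≤ (n : ℝ)}).toReal) Filter.atTop
        (nhds 1) := by
      have := (ENNReal.tendsto_toReal (by norm_num : (1 : ENNReal) ≠ ⊤)).comp h1
      simpa [Function.comp_def] using this
    have h3 : ∀ᶠ n : ℕ in Filter.atTop, α ≤ (P {ω | M ω ≤ (n : ℝ)}).toReal :=
      h2.eventually (eventually_ge_nhds hα.2)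
    obtain ⟨n, hn⟩ := h3.exists
    exact ⟨(n : ℝ), hn⟩
  -- S₀ is bounded below
  have hbdd : BddBelow S₀ := by
    have hI : (⋂ n : ℕ, {ω | M ω ≤ -(n : ℝ)}) = ∅ := by
      ext ω; simp only [mem_iInter, mem_setOf_eq, mem_empty_iff_false, iff_false, not_forall]
      obtain ⟨n, hn⟩ := exists_nat_gt (-M ω)
      exact ⟨n, by push_neg; linarith⟩
    have hanti : Antitone fun n : ℕ => {ω | M ω ≤ -(n : ℝ)} := by
      intro m n hmn ω hω
      simp only [mem_setOf_eq] at hω ⊢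
      refine le_trans hω (neg_le_neg ?_)
      exact_mod_cast hmn
    have h1 : Filter.Tendsto (fun n : ℕ => P {ω | M ω ≤ -(n : ℝ)}) Filter.atTop
        (nhds (P (⋂ n : ℕ, {ω | M ω ≤ -(n : ℝ)}))) :=
      tendsto_measure_iInter_atTop
        (fun n => (measurableSet_le hMmeas measurable_const).nullMeasurableSet)
        hanti ⟨0, measure_ne_top P _⟩
    rw [hI, measure_empty] at h1
    have h2 : Filter.Tendsto (fun n : ℕ => (P {ω | M ω ≤ -(n : ℝ)}).toReal) Filter.atTop
        (nhds 0) := by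
      have := (ENNReal.tendsto_toReal (by norm_num : (0 : ENNReal) ≠ ⊤)).comp h1
      simpa [Function.comp_def] using this
    have h3 : ∀ᶠ n : ℕ in Filter.atTop, (P {ω | M ω ≤ -(n : ℝ)}).toReal < α :=
      h2.eventually (eventually_lt_nhds hα.1)
    obtain ⟨n, hn⟩ := h3.exists
    refine ⟨-(n : ℝ), fun s hs => ?_⟩
    by_contra hlt
    push_neg at hlt
    exact absurd (le_trans hs (hmono _ _ hlt.le)) (not_le.2 hn)
  set c : ℝ := F₀inv u with hc
  -- First part: translation of the quantile
  have hset : {t : ℝ | α ≤ (P {ω | c + M ω ≤ t}).toReal} = (fun s => c + s) '' S₀ := by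
    ext t
    simp only [mem_image, mem_setOf_eq, hS₀]
    constructor
    · intro ht
      refine ⟨t - c, ?_, by ring⟩
      convert ht using 3
      ext ω; simp only [mem_setOf_eq]; constructor <;> intro <;> linarith
    · rintro ⟨s, hs, rfl⟩
      convert hs using 3
      ext ω; simp only [mem_setOf_eq]; constructor <;> intro <;> linarith
  have hpart1 : lowerQuantile P α (fun ω => c + M ω) = c + lowerQuantile P α M := by
    unfold lowerQuantile
    rw [hset]
    have := ((OrderIso.addLeft c).map_csInf' hne hbdd).symm
    simpa using this
  refine ⟨hpart1, ?_⟩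
  -- Second part: the generalized inverse
  set q : ℝ := lowerQuantile P α M with hq
  have hIci : {x : ℝ | u ≤ F₀ (x - q)} = Ici (c + q) := by
    ext x
    simp only [mem_setOf_eq, mem_Ici]
    rw [← hinv u hu, hstrict.le_iff_le]
    constructor <;> intro <;> linarith
  unfold gInv
  rw [hIci, csInf_Ici]
end
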